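/- arXiv:2109.01837 — 7 statements merged into one kernel-verified Lean document; each statement's English description precedes it below -/
import Mathlib

section
/- (Jacobi triple product, exponential form.) For every s > 0 and every real x, the absolutely convergent series ∑_{n∈ℤ} e^{i n x} · e^{-n² s} equals the convergent infinite product ∏_{m=1}^∞ (1 - e^{-2ms}) · (1 + 2 cos(x) e^{-(2m-1)s} + e^{-(4m-2)s}). -/
/-!
The coefficient of `z ^ j` in `∏_{m<N} (1 + q^(2m+1) z)(1 + q^(2m+1) / z)` is `q^(j²)` times the
Gaussian binomial coefficient `[2N, N + j]` in base `q²`: multiplying by the next factor acts on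
coefficients by a three-term recurrence, which the closed form satisfies. As `N → ∞` these
coefficients tend to `q^(j²) / (q²; q²)_∞` and are dominated by `q^(j²) / (q²; q²)_∞²`, so
dominated convergence gives
`(q²; q²)_∞ ∏_{m ≥ 0} (1 + q^(2m+1) z)(1 + q^(2m+1) / z) = ∑_j q^(j²) z^j`.
The theorem is the case `q = e^{-s}`, `z = e^{ix}`.
-/

open Filter Topology Finset

namespace JacobiTripleProduct

lemma hasSum_trinomial_mul {K : Type*} [Field K] [TopologicalSpace K] [IsTopologicalRing K]
    {f : ℤ → K} {z S : K} (hz : z ≠ 0) (a b c : K) (h : HasSum (fun j => f j * z ^ j) S) :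
    HasSum (fun j => (a * f (j + 1) + b * f j + c * f (j - 1)) * z ^ j)
      ((a * z⁻¹ + b + c * z) * S) := by
  have hup : HasSum (fun j => f (j + 1) * z ^ j) (z⁻¹ * S) :=
    (((Equiv.addRight (1 : ℤ)).hasSum_iff.2 h).mul_left z⁻¹).congr_fun fun j => by
      simp [zpow_add₀ hz]
      field_simp
  have hdown : HasSum (fun j => f (j - 1) * z ^ j) (z * S) :=
    (((Equiv.subRight (1 : ℤ)).hasSum_iff.2 h).mul_left z).congr_fun fun j => by
      simp [zpow_sub₀ hz]
      field_simp
  rw [show (a * z⁻¹ + b + c * z) * S = a * (z⁻¹ * S) + b * S + c * (z * S) by ring]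
  exact (((hup.mul_left a).add (h.mul_left b)).add (hdown.mul_left c)).congr_fun fun j => by ring

section QPochhammer

variable {t : ℝ}

/-- The q-Pochhammer symbol `(t; t)_n`. -/
def qPochhammer (t : ℝ) (n : ℕ) : ℝ := ∏ i ∈ range n, (1 - t ^ (i + 1))

noncomputable def qPochhammerInf (t : ℝ) : ℝ := ∏' i : ℕ, (1 - t ^ (i + 1))

/-- `1 / (t; t)_n`, extended by `0` to negative `n` (as `1 / Γ` vanishes at its poles), so that
Gaussian binomial coefficients built from it vanish outside their natural range. -/
noncomputable def qPochhammerInv (t : ℝ) (n : ℤ) : ℝ :=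
  if 0 ≤ n then (qPochhammer t n.toNat)⁻¹ else 0

lemma qPochhammer_succ (t : ℝ) (n : ℕ) :
    qPochhammer t (n + 1) = qPochhammer t n * (1 - t ^ (n + 1)) :=
  prod_range_succ _ _

variable (h0 : 0 ≤ t) (h1 : t < 1)
include h0 h1

lemma one_sub_pow_succ_pos (n : ℕ) : 0 < 1 - t ^ (n + 1) :=
  sub_pos.2 (pow_lt_one₀ h0 h1 n.succ_ne_zero)

lemma qPochhammer_pos (n : ℕ) : 0 < qPochhammer t n :=
  prod_pos fun i _ => one_sub_pow_succ_pos h0 h1 i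

lemma qPochhammer_le_one (n : ℕ) : qPochhammer t n ≤ 1 :=
  prod_le_one (fun i _ => (one_sub_pow_succ_pos h0 h1 i).le)
    fun _ _ => sub_le_self _ (pow_nonneg h0 _)

lemma qPochhammer_antitone : Antitone (qPochhammer t) :=
  antitone_nat_of_succ_le fun n => by
    rw [qPochhammer_succ]
    exact mul_le_of_le_one_right (qPochhammer_pos h0 h1 n).le (sub_le_self _ (pow_nonneg h0 _))

lemma summable_log_one_sub_pow_succ : Summable fun i : ℕ => Real.log (1 - t ^ (i + 1)) := by
  have hsum : Summable fun i : ℕ => -t ^ (i + 1) :=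
    ((summable_geometric_of_lt_one h0 h1).mul_left t).neg.congr fun i => by ring
  simpa only [sub_eq_add_neg] using Real.summable_log_one_add_of_summable hsum

lemma hasProd_qPochhammerInf : HasProd (fun i : ℕ => 1 - t ^ (i + 1)) (qPochhammerInf t) :=
  (Real.multipliable_of_summable_log (one_sub_pow_succ_pos h0 h1)
    (summable_log_one_sub_pow_succ h0 h1)).hasProd

lemma qPochhammerInf_pos : 0 < qPochhammerInf t := by
  rw [qPochhammerInf, ← Real.rexp_tsum_eq_tprod (one_sub_pow_succ_pos h0 h1)
    (summable_log_one_sub_pow_succ h0 h1)]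
  exact Real.exp_pos _

lemma tendsto_qPochhammer : Tendsto (qPochhammer t) atTop (𝓝 (qPochhammerInf t)) :=
  (hasProd_qPochhammerInf h0 h1).tendsto_prod_nat

lemma qPochhammerInf_le (n : ℕ) : qPochhammerInf t ≤ qPochhammer t n :=
  (qPochhammer_antitone h0 h1).le_of_tendsto (tendsto_qPochhammer h0 h1) n

omit h0 h1 in
lemma qPochhammerInv_natCast (n : ℕ) : qPochhammerInv t n = (qPochhammer t n)⁻¹ := by
  simp [qPochhammerInv]

omit h0 h1 in
lemma qPochhammerInv_of_neg {n : ℤ} (hn : n < 0) : qPochhammerInv t n = 0 :=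
  if_neg hn.not_ge

lemma qPochhammerInv_sub_one (n : ℤ) :
    qPochhammerInv t (n - 1) = (1 - t ^ n) * qPochhammerInv t n := by
  rcases le_or_gt n 0 with hn | hn
  · rw [qPochhammerInv_of_neg (by omega)]
    rcases hn.lt_or_eq with hn | rfl
    · rw [qPochhammerInv_of_neg hn, mul_zero]
    · rw [zpow_zero, sub_self, zero_mul]
  · obtain ⟨k, rfl⟩ : ∃ k : ℕ, n = k + 1 := ⟨(n - 1).toNat, by omega⟩
    have hk := (qPochhammer_pos h0 h1 k).ne'
    have hk1 := (one_sub_pow_succ_pos h0 h1 k).ne'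
    rw [add_sub_cancel_right, ← Nat.cast_succ, qPochhammerInv_natCast, qPochhammerInv_natCast,
      zpow_natCast, qPochhammer_succ]
    field_simp

lemma qPochhammerInv_nonneg (n : ℤ) : 0 ≤ qPochhammerInv t n := by
  unfold qPochhammerInv
  split_ifs
  exacts [inv_nonneg.2 (qPochhammer_pos h0 h1 _).le, le_rfl]

lemma qPochhammerInv_le (n : ℤ) : qPochhammerInv t n ≤ (qPochhammerInf t)⁻¹ := by
  unfold qPochhammerInv
  split_ifs
  · exact inv_anti₀ (qPochhammerInf_pos h0 h1) (qPochhammerInf_le h0 h1 _)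
  · exact inv_nonneg.2 (qPochhammerInf_pos h0 h1).le

lemma tendsto_qPochhammerInv :
    Tendsto (qPochhammerInv t) atTop (𝓝 (qPochhammerInf t)⁻¹) := by
  have htoNat : Tendsto Int.toNat atTop atTop :=
    tendsto_atTop_atTop.2 fun b => ⟨b, fun n hn => by omega⟩
  refine (((tendsto_qPochhammer h0 h1).comp htoNat).inv₀
    (qPochhammerInf_pos h0 h1).ne').congr' ?_
  filter_upwards [eventually_ge_atTop 0] with n hn
  simp [qPochhammerInv, hn]

end QPochhammer

variable {q : ℝ}

/-- `q ^ (j²)` times the Gaussian binomial coefficient `[2N, N + j]` in base `q²`. -/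
noncomputable def jacobiTripleCoeff (q : ℝ) (N : ℕ) (j : ℤ) : ℝ :=
  q ^ (j ^ 2) * qPochhammer (q ^ 2) (2 * N) * qPochhammerInv (q ^ 2) (N + j) *
    qPochhammerInv (q ^ 2) (N - j)

lemma jacobiTripleCoeff_zero (j : ℤ) :
    jacobiTripleCoeff q 0 j = if j = 0 then 1 else 0 := by
  split_ifs with hj
  · simp [jacobiTripleCoeff, hj, qPochhammer, qPochhammerInv]
  · rcases lt_or_gt_of_ne hj with hj | hj
    · simp [jacobiTripleCoeff, qPochhammerInv_of_neg hj]
    · simp [jacobiTripleCoeff, qPochhammerInv_of_neg (neg_neg_of_pos hj)]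

/-- Expressing each `1 / (q²; q²)` through those at `N + 1 ± j` turns this into a polynomial
identity in `q`, `q ^ N` and `q ^ j`. -/
lemma jacobiTripleCoeff_succ (hq0 : 0 < q) (hq1 : q < 1) (N : ℕ) (j : ℤ) :
    jacobiTripleCoeff q (N + 1) j = q ^ (2 * N + 1) * jacobiTripleCoeff q N (j + 1) +
      (1 + (q ^ (2 * N + 1)) ^ 2) * jacobiTripleCoeff q N j +
      q ^ (2 * N + 1) * jacobiTripleCoeff q N (j - 1) := by
  have hq : q ≠ 0 := hq0.ne'
  have hI (m n : ℤ) (h : m = n - 1) :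
      qPochhammerInv (q ^ 2) m = (1 - (q ^ n) ^ 2) * qPochhammerInv (q ^ 2) n := by
    have hsq : (q ^ 2) ^ n = (q ^ n) ^ 2 := by
      rw [← zpow_natCast, ← zpow_natCast, ← zpow_mul, ← zpow_mul, mul_comm]
    rw [h, qPochhammerInv_sub_one (by positivity) (by nlinarith), hsq]
  have hQ : qPochhammer (q ^ 2) (2 * (N + 1)) =
      qPochhammer (q ^ 2) (2 * N) * (1 - q ^ (4 * N + 2)) * (1 - q ^ (4 * N + 4)) := by
    rw [show 2 * (N + 1) = 2 * N + 1 + 1 by ring, qPochhammer_succ, qPochhammer_succ]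
    ring
  simp only [jacobiTripleCoeff]
  rw [hQ, hI (N + j) (N + 1 + j) (by ring), hI (N + (j - 1)) (N + j) (by ring),
    hI (N + j) (N + 1 + j) (by ring), hI (N - j) (N + 1 - j) (by ring),
    hI (N - (j + 1)) (N - j) (by ring), hI (N - j) (N + 1 - j) (by ring),
    show (N : ℤ) + (j + 1) = N + 1 + j by ring, show (N : ℤ) - (j - 1) = N + 1 - j by ring,
    show ((N + 1 : ℕ) : ℤ) + j = N + 1 + j by push_cast; ring,
    show ((N + 1 : ℕ) : ℤ) - j = N + 1 - j by push_cast; ring,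
    show (j + 1) ^ 2 = j ^ 2 + 2 * j + 1 by ring, show (j - 1) ^ 2 = j ^ 2 - 2 * j + 1 by ring]
  simp only [zpow_add₀ hq, zpow_sub₀ hq, zpow_natCast, zpow_one, zpow_mul']
  field_simp
  ring

lemma hasSum_jacobiTripleCoeff_mul_zpow (hq0 : 0 < q) (hq1 : q < 1) {z : ℂ} (hz : z ≠ 0) (N : ℕ) :
    HasSum (fun j : ℤ => (jacobiTripleCoeff q N j : ℂ) * z ^ j)
      (∏ m ∈ range N, (1 + (q : ℂ) ^ (2 * m + 1) * z) * (1 + (q : ℂ) ^ (2 * m + 1) * z⁻¹)) := by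
  induction N with
  | zero =>
    have h := hasSum_single (f := fun j : ℤ => (jacobiTripleCoeff q 0 j : ℂ) * z ^ j) 0
      fun j hj => by simp [jacobiTripleCoeff_zero, hj]
    simpa [jacobiTripleCoeff_zero] using h
  | succ N ih =>
    have hfactor : (1 + (q : ℂ) ^ (2 * N + 1) * z) * (1 + (q : ℂ) ^ (2 * N + 1) * z⁻¹) =
        (q : ℂ) ^ (2 * N + 1) * z⁻¹ + (1 + ((q : ℂ) ^ (2 * N + 1)) ^ 2) +
          (q : ℂ) ^ (2 * N + 1) * z := by
      field_simp
      ring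
    rw [prod_range_succ, mul_comm, hfactor]
    refine (hasSum_trinomial_mul hz _ _ _ ih).congr_fun fun j => ?_
    rw [jacobiTripleCoeff_succ hq0 hq1]
    push_cast
    ring

section Limit

lemma summable_pow_sq_mul_pow (hq0 : 0 ≤ q) (hq1 : q < 1) (r : ℝ) :
    Summable fun n : ℕ => q ^ (n ^ 2) * r ^ n := by
  have hsmall : ∀ᶠ n : ℕ in atTop, q ^ n * |r| ≤ 1 / 2 := by
    have := (tendsto_pow_atTop_nhds_zero_of_lt_one hq0 hq1).mul_const |r|
    rw [zero_mul] at this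
    exact this.eventually_le_const one_half_pos
  refine summable_geometric_two.of_norm_bounded_eventually_nat ?_
  filter_upwards [hsmall] with n hn
  calc ‖q ^ (n ^ 2) * r ^ n‖ = (q ^ n * |r|) ^ n := by
        rw [norm_mul, norm_pow, norm_pow, Real.norm_of_nonneg hq0, Real.norm_eq_abs, sq, pow_mul,
          mul_pow]
    _ ≤ (1 / 2) ^ n := pow_le_pow_left₀ (by positivity) hn n

lemma summable_zpow_sq_mul_zpow (hq0 : 0 ≤ q) (hq1 : q < 1) (r : ℝ) :
    Summable fun n : ℤ => q ^ (n ^ 2) * r ^ n := by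
  refine Summable.of_nat_of_neg ?_ ?_
  · simpa [← zpow_natCast] using summable_pow_sq_mul_pow hq0 hq1 r
  · simpa [← zpow_natCast] using summable_pow_sq_mul_pow hq0 hq1 r⁻¹

variable (hq0 : 0 < q) (hq1 : q < 1)
include hq0 hq1

lemma jacobiTripleCoeff_nonneg (N : ℕ) (j : ℤ) : 0 ≤ jacobiTripleCoeff q N j := by
  have h1 : q ^ 2 < 1 := pow_lt_one₀ hq0.le hq1 two_ne_zero
  unfold jacobiTripleCoeff
  have := qPochhammer_pos (sq_nonneg q) h1 (2 * N)
  have := qPochhammerInv_nonneg (sq_nonneg q) h1 (N + j)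
  have := qPochhammerInv_nonneg (sq_nonneg q) h1 (N - j)
  positivity

lemma jacobiTripleCoeff_le (N : ℕ) (j : ℤ) :
    jacobiTripleCoeff q N j ≤ q ^ (j ^ 2) * (qPochhammerInf (q ^ 2))⁻¹ ^ 2 := by
  have h1 : q ^ 2 < 1 := pow_lt_one₀ hq0.le hq1 two_ne_zero
  have hE := qPochhammerInf_pos (sq_nonneg q) h1
  have hI := qPochhammerInv_nonneg (sq_nonneg q) h1
  calc jacobiTripleCoeff q N j
        ≤ q ^ (j ^ 2) * 1 * (qPochhammerInf (q ^ 2))⁻¹ * (qPochhammerInf (q ^ 2))⁻¹ := by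
        unfold jacobiTripleCoeff
        gcongr
        all_goals first
          | exact hI _
          | exact qPochhammer_le_one (sq_nonneg q) h1 _
          | exact qPochhammerInv_le (sq_nonneg q) h1 _
    _ = q ^ (j ^ 2) * (qPochhammerInf (q ^ 2))⁻¹ ^ 2 := by ring

lemma tendsto_jacobiTripleCoeff (j : ℤ) :
    Tendsto (jacobiTripleCoeff q · j) atTop (𝓝 (q ^ (j ^ 2) * (qPochhammerInf (q ^ 2))⁻¹)) := by
  have h1 : q ^ 2 < 1 := pow_lt_one₀ hq0.le hq1 two_ne_zero
  have hE := (qPochhammerInf_pos (sq_nonneg q) h1).ne'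
  have hshift (k : ℤ) : Tendsto (fun N : ℕ => (N : ℤ) + k) atTop atTop :=
    tendsto_atTop_add_const_right _ k tendsto_natCast_atTop_atTop
  have := (((tendsto_const_nhds (x := q ^ (j ^ 2))).mul ((tendsto_qPochhammer (sq_nonneg q) h1).comp
    ((strictMono_mul_left_of_pos two_pos).tendsto_atTop))).mul
    ((tendsto_qPochhammerInv (sq_nonneg q) h1).comp (hshift j))).mul
    ((tendsto_qPochhammerInv (sq_nonneg q) h1).comp (hshift (-j)))
  convert this using 2
  · simp [jacobiTripleCoeff, sub_eq_add_neg]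
  · field_simp

theorem tendsto_prod_range_jacobi_triple {z : ℂ} (hz : z ≠ 0) :
    Tendsto (fun N => ∏ m ∈ range N, (1 - ((q : ℂ) ^ 2) ^ (m + 1)) *
        ((1 + (q : ℂ) ^ (2 * m + 1) * z) * (1 + (q : ℂ) ^ (2 * m + 1) * z⁻¹)))
      atTop (𝓝 (∑' n : ℤ, (q : ℂ) ^ (n ^ 2) * z ^ n)) := by
  have h1 : q ^ 2 < 1 := pow_lt_one₀ hq0.le hq1 two_ne_zero
  set E := qPochhammerInf (q ^ 2)
  have hE0 : 0 < E := qPochhammerInf_pos (sq_nonneg q) h1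
  have hE : Tendsto (fun N => ∏ m ∈ range N, (1 - ((q : ℂ) ^ 2) ^ (m + 1))) atTop (𝓝 (E : ℂ)) := by
    convert (Complex.continuous_ofReal.tendsto _).comp (tendsto_qPochhammer (sq_nonneg q) h1)
    simp [qPochhammer]
  have hW : Tendsto
      (fun N => ∏ m ∈ range N, (1 + (q : ℂ) ^ (2 * m + 1) * z) * (1 + (q : ℂ) ^ (2 * m + 1) * z⁻¹))
      atTop (𝓝 (∑' n : ℤ, ((q ^ (n ^ 2) * E⁻¹ : ℝ) : ℂ) * z ^ n)) := by
    refine (tendsto_tsum_of_dominated_convergence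
      (bound := fun n : ℤ => q ^ (n ^ 2) * ‖z‖ ^ n * E⁻¹ ^ 2)
      ((summable_zpow_sq_mul_zpow hq0.le hq1 ‖z‖).mul_right _)
      (fun n => ((Complex.continuous_ofReal.tendsto _).comp
        (tendsto_jacobiTripleCoeff hq0 hq1 n)).mul_const _) ?_).congr
      fun N => (hasSum_jacobiTripleCoeff_mul_zpow hq0 hq1 hz N).tsum_eq
    refine Eventually.of_forall fun N n => ?_
    rw [norm_mul, norm_zpow, Function.comp_apply, Complex.norm_real,
      Real.norm_of_nonneg (jacobiTripleCoeff_nonneg hq0 hq1 N n)]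
    calc jacobiTripleCoeff q N n * ‖z‖ ^ n ≤ q ^ (n ^ 2) * E⁻¹ ^ 2 * ‖z‖ ^ n := by
          gcongr
          exact jacobiTripleCoeff_le hq0 hq1 N n
      _ = q ^ (n ^ 2) * ‖z‖ ^ n * E⁻¹ ^ 2 := by ring
  have hlim : (E : ℂ) * ∑' n : ℤ, ((q ^ (n ^ 2) * E⁻¹ : ℝ) : ℂ) * z ^ n =
      ∑' n : ℤ, (q : ℂ) ^ (n ^ 2) * z ^ n := by
    have hE0' : (E : ℂ) ≠ 0 := Complex.ofReal_ne_zero.2 hE0.ne'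
    rw [← tsum_mul_left]
    congr 1 with n
    push_cast
    field_simp
  simpa only [← prod_mul_distrib, hlim] using hE.mul hW

end Limit

lemma multipliable_jacobi_triple_factor (hq0 : 0 ≤ q) (hq1 : q < 1) (c : ℝ) :
    Multipliable fun m : ℕ =>
      (1 - (q ^ 2) ^ (m + 1)) * (1 + 2 * c * q ^ (2 * m + 1) + (q ^ (2 * m + 1)) ^ 2) := by
  have h1 : q ^ 2 < 1 := pow_lt_one₀ hq0 hq1 two_ne_zero
  have hodd : Summable fun m : ℕ => q ^ (2 * m + 1) :=
    ((summable_geometric_of_lt_one (sq_nonneg q) h1).mul_left q).congr fun m => by ring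
  have hodd_sq : Summable fun m : ℕ => (q ^ (2 * m + 1)) ^ 2 :=
    ((summable_geometric_of_lt_one (by positivity)
      (pow_lt_one₀ (sq_nonneg q) h1 two_ne_zero)).mul_left (q ^ 2)).congr fun m => by ring
  refine (hasProd_qPochhammerInf (sq_nonneg q) h1).multipliable.mul ?_
  simpa only [add_assoc] using
    Real.multipliable_one_add_of_summable ((hodd.mul_left (2 * c)).add hodd_sq)

lemma ofReal_one_add_two_cos_mul_add_sq (x a : ℝ) :
    ((1 + 2 * Real.cos x * a + a ^ 2 : ℝ) : ℂ) =
      (1 + a * Complex.exp (x * Complex.I)) * (1 + a * (Complex.exp (x * Complex.I))⁻¹) := by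
  rw [← Complex.exp_neg, ← neg_mul, Complex.exp_mul_I, Complex.exp_mul_I, Complex.cos_neg,
    Complex.sin_neg]
  push_cast
  linear_combination (a : ℂ) ^ 2 * (Complex.sin_sq_add_cos_sq (x : ℂ)).symm +
    (a : ℂ) ^ 2 * Complex.sin x ^ 2 * Complex.I_sq

lemma exp_term_eq (s x : ℝ) (n : ℤ) :
    Complex.exp (Complex.I * n * x) * Complex.exp (-(n : ℂ) ^ 2 * s) =
      (Real.exp (-s) : ℂ) ^ (n ^ 2) * Complex.exp (x * Complex.I) ^ n := by
  rw [mul_comm, show Complex.I * n * x = n * (x * Complex.I) by ring, Complex.exp_int_mul,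
    show -(n : ℂ) ^ 2 * s = ((n ^ 2 : ℤ) : ℂ) * ((-s : ℝ) : ℂ) by push_cast; ring,
    Complex.exp_int_mul, ← Complex.ofReal_exp]

lemma exp_factor_eq (s x : ℝ) (m : ℕ) :
    (1 - Real.exp (-(2 * ((m : ℝ) + 1)) * s)) *
        (1 + 2 * Real.cos x * Real.exp (-(2 * ((m : ℝ) + 1) - 1) * s) +
          Real.exp (-(4 * ((m : ℝ) + 1) - 2) * s)) =
      (1 - (Real.exp (-s) ^ 2) ^ (m + 1)) *
        (1 + 2 * Real.cos x * Real.exp (-s) ^ (2 * m + 1) + (Real.exp (-s) ^ (2 * m + 1)) ^ 2) := by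
  have hexp (k : ℕ) (y : ℝ) (hy : y = k * -s) : Real.exp y = Real.exp (-s) ^ k := by
    rw [hy, Real.exp_nat_mul]
  rw [hexp (2 * (m + 1)) (-(2 * ((m : ℝ) + 1)) * s) (by push_cast; ring),
    hexp (2 * m + 1) (-(2 * ((m : ℝ) + 1) - 1) * s) (by push_cast; ring),
    hexp (2 * (2 * m + 1)) (-(4 * ((m : ℝ) + 1) - 2) * s) (by push_cast; ring)]
  ring

end JacobiTripleProduct

open JacobiTripleProduct

open Filter Set

/-- The Jacobi triple product, exponential form: for `s > 0` and real `x`, the absolutely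
convergent series `∑_{n ∈ ℤ} e^{inx} e^{-n²s}` equals the convergent infinite product
`∏_{m ≥ 1} (1 - e^{-2ms})(1 + 2 cos x · e^{-(2m-1)s} + e^{-(4m-2)s})`. -/
theorem jacobi_triple_product_exponential (s x : ℝ) (hs : 0 < s) :
    (Summable fun n : ℤ =>
      ‖Complex.exp (Complex.I * (n : ℂ) * (x : ℂ)) * Complex.exp (-(n : ℂ) ^ 2 * (s : ℂ))‖) ∧
    ∃ P : ℝ,
      HasProd (fun m : ℕ =>
        (1 - Real.exp (-(2 * ((m : ℝ) + 1)) * s)) *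
          (1 + 2 * Real.cos x * Real.exp (-(2 * ((m : ℝ) + 1) - 1) * s) +
            Real.exp (-(4 * ((m : ℝ) + 1) - 2) * s))) P ∧
      (∑' n : ℤ, Complex.exp (Complex.I * (n : ℂ) * (x : ℂ)) *
          Complex.exp (-(n : ℂ) ^ 2 * (s : ℂ))) = (P : ℂ) := by
  have hq0 : 0 < Real.exp (-s) := Real.exp_pos _
  have hq1 : Real.exp (-s) < 1 := Real.exp_lt_one_iff.2 (neg_neg_of_pos hs)
  have hprod := (multipliable_jacobi_triple_factor hq0.le hq1 (Real.cos x)).hasProd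
  simp only [exp_term_eq, exp_factor_eq]
  refine ⟨?_, _, hprod, tendsto_nhds_unique
    (tendsto_prod_range_jacobi_triple hq0 hq1 (Complex.exp_ne_zero (x * Complex.I))) ?_⟩
  · refine (summable_zpow_sq_mul_zpow hq0.le hq1 1).congr fun n => ?_
    rw [norm_mul, norm_zpow, norm_zpow, Complex.norm_real, Complex.norm_exp_ofReal_mul_I,
      Real.norm_of_nonneg hq0.le]
  · refine ((Complex.continuous_ofReal.tendsto _).comp hprod.tendsto_prod_nat).congr fun N => ?_
    rw [Function.comp_apply, Complex.ofReal_prod]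
    refine prod_congr rfl fun m _ => ?_
    rw [Complex.ofReal_mul, ofReal_one_add_two_cos_mul_add_sq]
    push_cast
    rfl
end

section
/- Let α > 0, c > 0, x ∈ (0,π) and p ≥ 1 an integer. Then the symmetric tail series ∑_{|n| ≥ p} e^{i n x}/(c + |n|^α) (defined as the limit as q → ∞ of the finite sums over p ≤ |n| ≤ q) converges, and its modulus satisfies | ∑_{|n| ≥ p} e^{i n x}/(c + |n|^α) | ≤ 2 / ( sin(x/2) · (c + p^α) ). -/
/-!
For `p ≥ 1` the terms `n` and `-n` of the tail pair up, so the partial sums are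
`∑_{n=p}^{q} b n • (e^{inx} + e^{-inx})` with `b n = (c + n^α)⁻¹` decreasing to `0`.
The sums `∑_{n=j}^{k-1} e^{±inx}` are geometric, of modulus at most `1 / sin (x/2)` because
`|e^{ix} - 1| = 2 sin (x/2)`. Abel summation then bounds every block `∑_{n=j}^{k-1}` of the tail by
`2 b j / sin (x/2)`: this gives the Cauchy property and, for `j = p`, the bound on the limit.
-/

open Filter Set

theorem Finset.sum_filter_le_natAbs_Icc_neg {M : Type*} [AddCommMonoid M] (f : ℤ → M)
    {p : ℕ} (hp : 1 ≤ p) (q : ℕ) :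
    ∑ n ∈ (Finset.Icc (-(q : ℤ)) q).filter (fun n => p ≤ n.natAbs), f n
      = ∑ n ∈ Finset.Icc p q, (f n + f (-n)) := by
  rw [← Finset.sum_fiberwise_of_maps_to (g := Int.natAbs) (t := Finset.Icc p q)
    (fun n hn => by simp only [Finset.mem_filter, Finset.mem_Icc] at hn ⊢; omega)]
  refine Finset.sum_congr rfl fun n hn => ?_
  rw [Finset.mem_Icc] at hn
  have hfiber : ((Finset.Icc (-(q : ℤ)) q).filter (fun n => p ≤ n.natAbs)).filter
      (fun m => m.natAbs = n) = {(n : ℤ), -(n : ℤ)} := by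
    ext m
    simp only [Finset.mem_filter, Finset.mem_Icc, Finset.mem_insert, Finset.mem_singleton]
    omega
  rw [hfiber, Finset.sum_pair (by omega)]

theorem Complex.norm_sum_Ico_exp_I_mul_le {x : ℝ} (hx : Real.sin (x / 2) ≠ 0) (j k : ℕ) :
    ‖∑ n ∈ Finset.Ico j k, exp (I * n * x)‖ ≤ 1 / |Real.sin (x / 2)| := by
  rcases lt_or_ge k j with hkj | hjk
  · rw [Finset.Ico_eq_empty_of_le hkj.le, Finset.sum_empty, norm_zero]
    positivity
  set w := exp (I * x)
  have hw : ‖w‖ = 1 := norm_exp_I_mul_ofReal x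
  have hw1 : ‖w - 1‖ = 2 * |Real.sin (x / 2)| := by
    rw [norm_exp_I_mul_ofReal_sub_one, norm_mul, Real.norm_eq_abs, Real.norm_eq_abs, abs_two]
  have hpow : ∀ n : ℕ, exp (I * n * x) = w ^ n := fun n => by
    rw [← exp_nat_mul]; ring_nf
  simp_rw [hpow]
  have hw_ne : w ≠ 1 := fun h => hx (by simpa [h] using hw1.symm)
  rw [geom_sum_Ico hw_ne hjk, norm_div, hw1]
  calc ‖w ^ k - w ^ j‖ / (2 * |Real.sin (x / 2)|)
      ≤ (‖w ^ k‖ + ‖w ^ j‖) / (2 * |Real.sin (x / 2)|) := by gcongr; exact norm_sub_le _ _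
    _ = 1 / |Real.sin (x / 2)| := by
      rw [norm_pow, norm_pow, hw, one_pow]; field_simp; norm_num

theorem Complex.norm_sum_Ico_exp_I_mul_add_exp_I_mul_neg_le {x : ℝ} (hx : Real.sin (x / 2) ≠ 0)
    (j k : ℕ) :
    ‖∑ n ∈ Finset.Ico j k, (exp (I * n * x) + exp (I * n * ↑(-x)))‖
      ≤ 2 / |Real.sin (x / 2)| := by
  have hsin_neg : Real.sin (-x / 2) = -Real.sin (x / 2) := by rw [neg_div, Real.sin_neg]
  calc _ ≤ 1 / |Real.sin (x / 2)| + 1 / |Real.sin (-x / 2)| := by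
        rw [Finset.sum_add_distrib]
        refine (norm_add_le _ _).trans (add_le_add ?_ ?_) <;>
          exact norm_sum_Ico_exp_I_mul_le (by simpa [hsin_neg] using hx) j k
    _ = 2 / |Real.sin (x / 2)| := by rw [hsin_neg, abs_neg]; ring

theorem Finset.norm_sum_Ico_smul_le_of_antitone {E : Type*} [SeminormedAddCommGroup E]
    [NormedSpace ℝ E] {b : ℕ → ℝ} {z : ℕ → E} {M : ℝ} {j : ℕ} (hb : Antitone b)
    (hb0 : ∀ n, 0 ≤ b n) (hz : ∀ k, ‖∑ i ∈ Finset.Ico j k, z i‖ ≤ M) (k : ℕ) :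
    ‖∑ i ∈ Finset.Ico j k, b i • z i‖ ≤ M * b j := by
  rcases lt_or_ge k j with hkj | hjk
  · simpa [Finset.Ico_eq_empty_of_le hkj.le] using
      mul_nonneg ((norm_nonneg _).trans (hz 0)) (hb0 j)
  set S := fun k => ∑ i ∈ Finset.Ico j k, z i
  -- Abel summation, in the form of an invariant along `k`
  have key : ‖∑ i ∈ Finset.Ico j k, b i • z i - b k • S k‖ ≤ M * (b j - b k) := by
    induction k, hjk using Nat.le_induction with
    | base => simp [S]
    | succ k hjk ih =>
      have hstep : ∑ i ∈ Finset.Ico j (k + 1), b i • z i - b (k + 1) • S (k + 1)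
          = (∑ i ∈ Finset.Ico j k, b i • z i - b k • S k) + (b k - b (k + 1)) • S (k + 1) := by
        simp only [S, Finset.sum_Ico_succ_top hjk, smul_add, sub_smul]; abel
      have hbk : 0 ≤ b k - b (k + 1) := sub_nonneg.2 (hb k.le_succ)
      calc _ ≤ M * (b j - b k) + (b k - b (k + 1)) * M := by
            rw [hstep]
            refine (norm_add_le _ _).trans (add_le_add ih ?_)
            rw [norm_smul, Real.norm_of_nonneg hbk]
            exact mul_le_mul_of_nonneg_left (hz (k + 1)) hbk
        _ = M * (b j - b (k + 1)) := by ring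
  calc ‖∑ i ∈ Finset.Ico j k, b i • z i‖
      ≤ ‖∑ i ∈ Finset.Ico j k, b i • z i - b k • S k‖ + ‖b k • S k‖ := norm_le_norm_sub_add _ _
    _ ≤ M * (b j - b k) + b k * M := by
      rw [norm_smul, Real.norm_of_nonneg (hb0 k)]
      exact add_le_add key (mul_le_mul_of_nonneg_left (hz k) (hb0 k))
    _ = M * b j := by ring

theorem Antitone.exists_tendsto_sum_Ico_smul {E : Type*} [NormedAddCommGroup E]
    [NormedSpace ℝ E] [CompleteSpace E] {b : ℕ → ℝ} {z : ℕ → E} {M : ℝ} (hb : Antitone b)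
    (hb_lim : Tendsto b atTop (nhds 0)) (hz : ∀ j k, ‖∑ i ∈ Finset.Ico j k, z i‖ ≤ M) (p : ℕ) :
    ∃ L, Tendsto (fun n => ∑ i ∈ Finset.Ico p n, b i • z i) atTop (nhds L) ∧ ‖L‖ ≤ M * b p := by
  have hbound : ∀ j k, ‖∑ i ∈ Finset.Ico j k, b i • z i‖ ≤ M * b j := fun j =>
    Finset.norm_sum_Ico_smul_le_of_antitone hb (hb.le_of_tendsto hb_lim) (hz j)
  have hMb : Tendsto (fun n => M * b n) atTop (nhds 0) := by simpa using hb_lim.const_mul M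
  have hcauchy : CauchySeq fun n => ∑ i ∈ Finset.Ico p n, b i • z i := by
    refine Metric.cauchySeq_iff'.2 fun ε hε => ?_
    obtain ⟨N, hNε, hpN⟩ := ((hMb.eventually (gt_mem_nhds hε)).and (eventually_ge_atTop p)).exists
    refine ⟨N, fun n hNn => ?_⟩
    rw [dist_eq_norm, ← Finset.sum_Ico_consecutive _ hpN hNn, add_sub_cancel_left]
    exact (hbound N n).trans_lt hNε
  obtain ⟨L, hL⟩ := cauchySeq_tendsto_of_complete hcauchy
  exact ⟨L, hL, le_of_tendsto' hL.norm (hbound p)⟩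

/-- For `α, c > 0`, `x ∈ (0, π)` and `p ≥ 1`, the symmetric tail series
`∑_{|n| ≥ p} e^{inx}/(c + |n|^α)`, understood as the limit as `q → ∞` of the finite sums
over `p ≤ |n| ≤ q`, converges, and its modulus is at most `2 / (sin(x/2) (c + p^α))`. -/
theorem tail_series_bound (α c : ℝ) (hα : 0 < α) (hc : 0 < c)
    (x : ℝ) (hx : x ∈ Set.Ioo (0 : ℝ) Real.pi) (p : ℕ) (hp : 1 ≤ p) :
    ∃ L : ℂ,
      Tendsto (fun q : ℕ =>
          ∑ n ∈ (Finset.Icc (-(q : ℤ)) (q : ℤ)).filter (fun n => p ≤ n.natAbs),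
            Complex.exp (Complex.I * (n : ℂ) * (x : ℂ)) / ((c : ℂ) + ((n.natAbs : ℝ) ^ α : ℝ)))
        atTop (nhds L) ∧
      ‖L‖ ≤ 2 / (Real.sin (x / 2) * (c + (p : ℝ) ^ α)) := by
  have hs : 0 < Real.sin (x / 2) :=
    Real.sin_pos_of_pos_of_lt_pi (by linarith [hx.1]) (by linarith [hx.2, Real.pi_pos])
  set b : ℕ → ℝ := fun n => (c + (n : ℝ) ^ α)⁻¹
  set z : ℕ → ℂ := fun n => Complex.exp (Complex.I * n * x) + Complex.exp (Complex.I * n * ↑(-x))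
  have hb : Antitone b := fun m n hmn => inv_anti₀ (by positivity) (by gcongr)
  have hb_lim : Tendsto b atTop (nhds 0) :=
    (tendsto_atTop_add_const_left _ c
      ((tendsto_rpow_atTop hα).comp tendsto_natCast_atTop_atTop)).inv_tendsto_atTop
  have hz : ∀ j k, ‖∑ n ∈ Finset.Ico j k, z n‖ ≤ 2 / Real.sin (x / 2) := fun j k => by
    rw [← abs_of_pos hs]
    exact Complex.norm_sum_Ico_exp_I_mul_add_exp_I_mul_neg_le hs.ne' j k
  obtain ⟨L, hL, hL_le⟩ := hb.exists_tendsto_sum_Ico_smul hb_lim hz p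
  refine ⟨L, ?_, ?_⟩
  · convert hL.comp (tendsto_add_atTop_nat 1) using 2 with q
    rw [Finset.sum_filter_le_natAbs_Icc_neg _ hp, Function.comp_apply,
      Finset.Ico_add_one_right_eq_Icc]
    refine Finset.sum_congr rfl fun n _ => ?_
    simp only [b, z, Int.natAbs_neg, Int.natAbs_natCast, Complex.real_smul]
    push_cast
    ring_nf
  · calc ‖L‖ ≤ 2 / Real.sin (x / 2) * b p := hL_le
      _ = 2 / (Real.sin (x / 2) * (c + (p : ℝ) ^ α)) := by rw [← div_eq_mul_inv, div_div]
end

section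
/- Let (Ω, μ) be a probability measure space and f : Ω → ℝ a measurable function with f(ω) > 0 for μ-almost every ω. Then for every x ∈ (0,π): (i) for μ-a.e. ω the series ∑_{n∈ℤ} e^{i n x} e^{-n² f(ω)} converges absolutely; (ii) the symmetric partial sums ∑_{|n| ≤ N} e^{i n x} ∫_Ω e^{-n² f(ω)} dμ(ω) converge as N → ∞; and (iii) the integral and the sum can be exchanged: ∫_Ω ( ∑_{n∈ℤ} e^{i n x} e^{-n² f(ω)} ) dμ(ω) = lim_{N→∞} ∑_{|n| ≤ N} e^{i n x} ∫_Ω e^{-n² f(ω)} dμ(ω). -/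
/-!
Write `z = e^{ix}` and `D_N = ∑_{|n| ≤ N} zⁿ`. Since `|z| = 1` and `z ≠ 1`, the geometric sum
gives `|D_N| ≤ 2 / |z - 1|`. The weights `e^{-n² t}` depend only on `|n|` and decrease in `|n|`
for `t ≥ 0`, so summation by parts bounds the symmetric partial sums of the theta series by the
same constant, uniformly in `t = f(ω)`. Dominated convergence, with a constant dominating function
on a probability space, then exchanges the limit and the integral.
-/

open Filter Set MeasureTheory

section SymmetricSums

variable {E : Type*}

theorem Finset.sum_Icc_neg_natAbs_smul_by_parts {R : Type*} [Ring R] [AddCommGroup E]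
    [Module R E] (a : ℕ → R) (z : ℤ → E) (N : ℕ) :
    ∑ n ∈ Finset.Icc (-(N : ℤ)) N, a n.natAbs • z n =
      a N • ∑ n ∈ Finset.Icc (-(N : ℤ)) N, z n +
        ∑ k ∈ Finset.range N, (a k - a (k + 1)) • ∑ n ∈ Finset.Icc (-(k : ℤ)) k, z n := by
  induction N with
  | zero => simp
  | succ N ih =>
    rw [Nat.cast_succ, Finset.sum_Icc_succ_eq_add_endpoints, ih,
      Finset.sum_Icc_succ_eq_add_endpoints, Finset.sum_range_succ]
    simp only [Int.natAbs_neg, ← Nat.cast_succ, Int.natAbs_natCast, sub_smul, smul_add]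
    abel

theorem norm_sum_Icc_neg_natAbs_smul_le [SeminormedAddCommGroup E] [NormedSpace ℝ E]
    {a : ℕ → ℝ} (ha : Antitone a) (ha₀ : ∀ k, 0 ≤ a k) {z : ℤ → E} {M : ℝ}
    (hz : ∀ k : ℕ, ‖∑ n ∈ Finset.Icc (-(k : ℤ)) k, z n‖ ≤ M) (N : ℕ) :
    ‖∑ n ∈ Finset.Icc (-(N : ℤ)) N, a n.natAbs • z n‖ ≤ a 0 * M := by
  rw [Finset.sum_Icc_neg_natAbs_smul_by_parts]
  calc _ ≤ a N * M + ∑ k ∈ Finset.range N, (a k - a (k + 1)) * M := by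
        refine (norm_add_le _ _).trans (add_le_add ?_ ((norm_sum_le _ _).trans ?_))
        · rw [norm_smul, Real.norm_of_nonneg (ha₀ N)]
          exact mul_le_mul_of_nonneg_left (hz N) (ha₀ N)
        · refine Finset.sum_le_sum fun k _ => ?_
          rw [norm_smul, Real.norm_of_nonneg (sub_nonneg.mpr (ha k.le_succ))]
          exact mul_le_mul_of_nonneg_left (hz k) (sub_nonneg.mpr (ha k.le_succ))
    _ = a 0 * M := by rw [← Finset.sum_mul, Finset.sum_range_sub', ← add_mul, add_sub_cancel]

theorem norm_sum_Icc_neg_zpow_le {𝕜 : Type*} [NormedField 𝕜] {z : 𝕜} (hz : ‖z‖ = 1)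
    (hz₁ : z ≠ 1) (N : ℕ) :
    ‖∑ n ∈ Finset.Icc (-(N : ℤ)) N, z ^ n‖ ≤ 2 / ‖z - 1‖ := by
  have hz₀ : z ≠ 0 := by rintro rfl; simp at hz
  have hgeom : ∑ n ∈ Finset.Icc (-(N : ℤ)) N, z ^ n =
      z ^ (-(N : ℤ)) * ((z ^ (2 * N + 1) - 1) / (z - 1)) := by
    rw [← geom_sum_eq hz₁, Int.Icc_eq_finset_map, Finset.sum_map, Finset.mul_sum,
      show ((N : ℤ) + 1 - -N).toNat = 2 * N + 1 by omega]
    refine Finset.sum_congr rfl fun k _ => ?_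
    simp [zpow_add₀ hz₀]
  rw [hgeom, norm_mul, norm_zpow, hz, one_zpow, one_mul, norm_div]
  gcongr
  calc ‖z ^ (2 * N + 1) - 1‖ ≤ ‖z ^ (2 * N + 1)‖ + ‖(1 : 𝕜)‖ := norm_sub_le _ _
    _ = 2 := by rw [norm_pow, hz, one_pow, norm_one, one_add_one_eq_two]

theorem HasSum.tendsto_sum_Icc_neg [AddCommMonoid E] [TopologicalSpace E] {f : ℤ → E} {a : E}
    (h : HasSum f a) :
    Tendsto (fun N : ℕ => ∑ n ∈ Finset.Icc (-(N : ℤ)) N, f n) atTop (nhds a) :=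
  SummationFilter.hasSum_symmetricIcc_iff.mp (h.mono_left SummationFilter.le_atTop)

end SymmetricSums

section Integrals

variable {Ω : Type*} [MeasurableSpace Ω] {μ : Measure Ω} [IsFiniteMeasure μ]

theorem tendsto_sum_Icc_neg_integral_of_norm_le {E : Type*} [NormedAddCommGroup E]
    [NormedSpace ℝ E] {F : ℤ → Ω → E} {C : ℝ} (hF : ∀ n, Integrable (F n) μ)
    (hsum : ∀ᵐ ω ∂μ, Summable fun n => F n ω)
    (hC : ∀ N : ℕ, ∀ᵐ ω ∂μ, ‖∑ n ∈ Finset.Icc (-(N : ℤ)) N, F n ω‖ ≤ C) :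
    Tendsto (fun N : ℕ => ∑ n ∈ Finset.Icc (-(N : ℤ)) N, ∫ ω, F n ω ∂μ) atTop
      (nhds (∫ ω, ∑' n, F n ω ∂μ)) := by
  have hlim := tendsto_integral_of_dominated_convergence (fun _ => C)
    (fun N => (integrable_finsetSum _ fun n _ => hF n).aestronglyMeasurable)
    (integrable_const C) hC (hsum.mono fun _ h => h.hasSum.tendsto_sum_Icc_neg)
  simpa only [integral_finsetSum _ fun n _ => hF n] using hlim

theorem integrable_exp_neg_mul_of_nonneg {g : Ω → ℝ} (hg : AEMeasurable g μ)
    (hg₀ : ∀ᵐ ω ∂μ, 0 ≤ g ω) {c : ℝ} (hc : 0 ≤ c) :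
    Integrable (fun ω => Real.exp (-c * g ω)) μ := by
  refine Integrable.of_bound (by fun_prop) 1 (hg₀.mono fun ω hω => ?_)
  rw [Real.norm_of_nonneg (Real.exp_pos _).le, Real.exp_le_one_iff]
  nlinarith

end Integrals

section ThetaSeries

open Complex Real

variable (x : ℝ)

theorem cexp_mul_cexp_neg_sq_eq_jacobiTheta₂_term (t : ℝ) (n : ℤ) :
    cexp (I * n * x) * cexp (-(n : ℂ) ^ 2 * t) =
      jacobiTheta₂_term n (x / (2 * π)) (I * t / π) := by
  rw [jacobiTheta₂_term, ← Complex.exp_add]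
  congr 1
  field_simp
  ring_nf
  rw [I_sq]
  ring

theorem summable_norm_cexp_mul_cexp_neg_sq {t : ℝ} (ht : 0 < t) :
    Summable fun n : ℤ => ‖cexp (I * n * x) * cexp (-(n : ℂ) ^ 2 * t)‖ := by
  simp_rw [summable_norm_iff, cexp_mul_cexp_neg_sq_eq_jacobiTheta₂_term,
    summable_jacobiTheta₂_term_iff]
  simp only [div_ofReal_im, mul_im, I_re, ofReal_im, mul_zero, I_im, ofReal_re, one_mul, zero_add]
  positivity

theorem cexp_mul_cexp_neg_sq_eq_smul (t : ℝ) (n : ℤ) :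
    cexp (I * n * x) * cexp (-(n : ℂ) ^ 2 * t) =
      rexp (-(n.natAbs : ℝ) ^ 2 * t) • cexp (x * I) ^ n := by
  have hsq : (n.natAbs : ℝ) ^ 2 = (n : ℝ) ^ 2 := by rw [Nat.cast_natAbs, Int.cast_abs, sq_abs]
  rw [hsq, Complex.real_smul, ofReal_exp, ← Complex.exp_int_mul, mul_comm]
  push_cast
  ring_nf

theorem norm_sum_Icc_neg_cexp_mul_cexp_neg_sq_le (hx : cexp (x * I) ≠ 1) {t : ℝ} (ht : 0 ≤ t)
    (N : ℕ) :
    ‖∑ n ∈ Finset.Icc (-(N : ℤ)) N, cexp (I * n * x) * cexp (-(n : ℂ) ^ 2 * t)‖ ≤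
      2 / ‖cexp (x * I) - 1‖ := by
  have hdecay : Antitone fun k : ℕ => rexp (-(k : ℝ) ^ 2 * t) := fun a b hab =>
    exp_le_exp.mpr <| mul_le_mul_of_nonneg_right
      (neg_le_neg (pow_le_pow_left₀ (Nat.cast_nonneg _) (Nat.cast_le.mpr hab) 2)) ht
  simp_rw [cexp_mul_cexp_neg_sq_eq_smul]
  simpa using norm_sum_Icc_neg_natAbs_smul_le hdecay (fun _ => (exp_pos _).le)
    (norm_sum_Icc_neg_zpow_le (norm_exp_ofReal_mul_I x) hx) N

end ThetaSeries

/-- Exchange of sum and integral for the theta series: if `μ` is a probability measure,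
`f` is measurable and a.e. strictly positive, then for every `x ∈ (0, π)`:
(i) for a.e. `ω` the series `∑_{n ∈ ℤ} e^{inx} e^{-n² f(ω)}` converges absolutely, and
(ii)-(iii) the symmetric partial sums `∑_{|n| ≤ N} e^{inx} ∫ e^{-n² f} dμ` converge, with
limit `∫ (∑_{n ∈ ℤ} e^{inx} e^{-n² f(ω)}) dμ(ω)`. -/
theorem integral_tsum_exchange {Ω : Type*} [MeasurableSpace Ω]
    (μ : Measure Ω) [IsProbabilityMeasure μ]
    (f : Ω → ℝ) (hf : Measurable f) (hfpos : ∀ᵐ ω ∂μ, 0 < f ω)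
    (x : ℝ) (hx : x ∈ Set.Ioo (0 : ℝ) Real.pi) :
    (∀ᵐ ω ∂μ, Summable fun n : ℤ =>
      ‖Complex.exp (Complex.I * (n : ℂ) * (x : ℂ)) *
        Complex.exp (-(n : ℂ) ^ 2 * ((f ω : ℝ) : ℂ))‖) ∧
    Tendsto (fun N : ℕ =>
        ∑ n ∈ Finset.Icc (-(N : ℤ)) (N : ℤ),
          Complex.exp (Complex.I * (n : ℂ) * (x : ℂ)) *
            ((∫ ω, Real.exp (-(n : ℝ) ^ 2 * f ω) ∂μ : ℝ) : ℂ))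
      atTop
      (nhds (∫ ω, (∑' n : ℤ, Complex.exp (Complex.I * (n : ℂ) * (x : ℂ)) *
        Complex.exp (-(n : ℂ) ^ 2 * ((f ω : ℝ) : ℂ))) ∂μ)) := by
  have hxI : Complex.exp (x * Complex.I) ≠ 1 := fun h =>
    (Real.sin_pos_of_pos_of_lt_pi hx.1 hx.2).ne' (by simpa using congrArg Complex.im h)
  have hsum := hfpos.mono fun ω hω => summable_norm_cexp_mul_cexp_neg_sq x hω
  refine ⟨hsum, ?_⟩
  have hexp : ∀ (n : ℤ) (t : ℝ),
      Complex.exp (-(n : ℂ) ^ 2 * t) = (Real.exp (-(n : ℝ) ^ 2 * t) : ℂ) := fun n t => by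
    push_cast; rfl
  have hint : ∀ n : ℤ, Integrable (fun ω => Complex.exp (Complex.I * n * x) *
      Complex.exp (-(n : ℂ) ^ 2 * f ω)) μ := fun n => by
    simp_rw [hexp]
    exact (integrable_exp_neg_mul_of_nonneg hf.aemeasurable (hfpos.mono fun _ h => h.le)
      (sq_nonneg _)).ofReal.const_mul _
  have hlim := tendsto_sum_Icc_neg_integral_of_norm_le hint (hsum.mono fun _ h => h.of_norm)
    fun N => hfpos.mono fun ω hω => norm_sum_Icc_neg_cexp_mul_cexp_neg_sq_le x hxI hω.le N
  simp_rw [hexp, integral_const_mul, integral_complex_ofReal] at hlim ⊢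
  exact hlim
end

section
/- Let α ∈ (0,2) and c > 0. Then for every x > 0 the improper Fourier integral defining H_{α,c}(x) admits the absolutely convergent Laplace-type representation H_{α,c}(x) = (sin(πα/2)/π) · ∫_0^∞ e^{-tx} · t^α / ( c² + 2c·cos(πα/2)·t^α + t^{2α} ) dt. -/
open Filter Set MeasureTheory

/-!
Integrate `f z = e^{ixz} / (c + z^α)` over the boundary of the square with corners `0` and
`T (1 + i)`. In the closed first quadrant `arg z^α = α arg z ∈ [0, π)` because `α < 2`, so the
denominator never vanishes there and Cauchy's theorem applies. On the top and right edges
`|z| ≥ T` and `|e^{ixz}| = e^{-x Im z}`, which makes both edge integrals `O(1 / (x (T^α - c)))`.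
On the imaginary axis `(iy)^α = y^α e^{iπα/2}`, so `Re (i f (iy))` is `sin(πα/2)` times the
Laplace density, and letting `T → ∞` identifies `π H x`.
-/

open Complex (I arg)
open scoped Real

noncomputable section

def greenIntegrand (α c x : ℝ) (z : ℂ) : ℂ :=
  Complex.exp (I * z * x) / (c + z ^ (α : ℂ))

def greenLaplaceDensity (α c x t : ℝ) : ℝ :=
  Real.exp (-t * x) * (t ^ α / (c ^ 2 + 2 * c * Real.cos (π * α / 2) * t ^ α + t ^ (2 * α)))

end

section

variable {α c x : ℝ}

theorem ofReal_add_cpow_ne_zero (hα : 0 < α) (hα2 : α < 2) (hc : 0 < c) {z : ℂ}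
    (hre : 0 ≤ z.re) (him : 0 ≤ z.im) : (c : ℂ) + z ^ (α : ℂ) ≠ 0 := by
  rcases eq_or_ne z 0 with rfl | hz
  · simpa [Complex.zero_cpow (Complex.ofReal_ne_zero.2 hα.ne')] using hc.ne'
  have hpos : 0 < ‖z‖ ^ α := Real.rpow_pos_of_pos (norm_pos_iff.2 hz) α
  have harg_le : arg z ≤ π / 2 := Complex.arg_le_pi_div_two_iff.2 (Or.inl hre)
  rcases (Complex.arg_nonneg_iff.2 him).eq_or_lt with harg | harg
  · refine fun h => (by positivity : 0 < c + ‖z‖ ^ α).ne' ?_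
    simpa [Complex.cpow_ofReal_re, ← harg] using congrArg Complex.re h
  · have hsin : 0 < Real.sin (arg z * α) :=
      Real.sin_pos_of_pos_of_lt_pi (by positivity) (by nlinarith)
    refine fun h => (mul_pos hpos hsin).ne' ?_
    simpa [Complex.cpow_ofReal_im] using congrArg Complex.im h

theorem continuousOn_greenIntegrand (hα : 0 < α) (hα2 : α < 2) (hc : 0 < c) :
    ContinuousOn (greenIntegrand α c x) {z | 0 ≤ z.re ∧ 0 ≤ z.im} := by
  refine ContinuousOn.div (by fun_prop) (continuousOn_const.add fun z hz => ?_)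
    fun z hz => ofReal_add_cpow_ne_zero hα hα2 hc hz.1 hz.2
  exact (Complex.continuousAt_cpow_const_of_re_pos (Or.inl hz.1) (by simpa)).continuousWithinAt

theorem differentiableOn_greenIntegrand (hα : 0 < α) (hα2 : α < 2) (hc : 0 < c) :
    DifferentiableOn ℂ (greenIntegrand α c x) {z | 0 < z.re ∧ 0 < z.im} := by
  intro z hz
  have hpow : DifferentiableAt ℂ (fun z : ℂ => z ^ (α : ℂ)) z :=
    (Complex.hasStrictDerivAt_cpow_const (Or.inl hz.1)).hasDerivAt.differentiableAt
  have hexp : Differentiable ℂ fun z : ℂ => Complex.exp (I * z * x) := by fun_prop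
  exact ((hexp z).div (hpow.const_add _)
    (ofReal_add_cpow_ne_zero hα hα2 hc hz.1.le hz.2.le)).differentiableWithinAt

theorem re_greenIntegrand_ofReal {t : ℝ} (ht : 0 ≤ t) :
    (greenIntegrand α c x t).re = Real.cos (t * x) / (c + t ^ α) := by
  rw [greenIntegrand, ← Complex.ofReal_cpow ht, ← Complex.ofReal_add,
    show I * t * x = ((t * x : ℝ) : ℂ) * I by push_cast; ring,
    Complex.div_ofReal_re, Complex.exp_ofReal_mul_I_re]

theorem normSq_ofReal_add_cpow_ofReal_mul_I {y : ℝ} (hy : 0 < y) :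
    Complex.normSq (c + (y * I) ^ (α : ℂ)) =
      c ^ 2 + 2 * c * Real.cos (π * α / 2) * y ^ α + y ^ (2 * α) := by
  have hnorm : ‖(y : ℂ) * I‖ = y := by simp [hy.le]
  have harg : arg (y * I) = π / 2 := by simp [Complex.arg_eq_pi_div_two_iff, hy]
  rw [Complex.normSq_apply]
  simp only [Complex.add_re, Complex.add_im, Complex.ofReal_re, Complex.ofReal_im,
    Complex.cpow_ofReal_re, Complex.cpow_ofReal_im, hnorm, harg, zero_add]
  rw [mul_comm 2 α, Real.rpow_mul hy.le, Real.rpow_two, show π / 2 * α = π * α / 2 by ring]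
  linear_combination (y ^ α) ^ 2 * Real.sin_sq_add_cos_sq (π * α / 2)

theorem neg_im_greenIntegrand_ofReal_mul_I {y : ℝ} (hy : 0 < y) :
    -(greenIntegrand α c x (y * I)).im =
      Real.sin (π * α / 2) * greenLaplaceDensity α c x y := by
  have hnorm : ‖(y : ℂ) * I‖ = y := by simp [hy.le]
  have harg : arg (y * I) = π / 2 := by simp [Complex.arg_eq_pi_div_two_iff, hy]
  have hexp : Complex.exp (I * (y * I) * x) = (Real.exp (-y * x) : ℂ) := by
    rw [Complex.ofReal_exp]; congr 1; push_cast; ring_nf; simp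
  rw [greenIntegrand, hexp, Complex.div_im, normSq_ofReal_add_cpow_ofReal_mul_I hy]
  simp only [Complex.ofReal_re, Complex.ofReal_im, Complex.add_im, Complex.cpow_ofReal_im,
    hnorm, harg, greenLaplaceDensity]
  rw [show π / 2 * α = π * α / 2 by ring]
  ring

theorem intervalIntegrable_greenIntegrand_comp (hα : 0 < α) (hα2 : α < 2) (hc : 0 < c)
    {γ : ℝ → ℂ} (hγ : Continuous γ) {T : ℝ}
    (hmaps : ∀ t ∈ uIcc 0 T, 0 ≤ (γ t).re ∧ 0 ≤ (γ t).im) :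
    IntervalIntegrable (fun t => greenIntegrand α c x (γ t)) volume 0 T :=
  ((continuousOn_greenIntegrand hα hα2 hc).comp hγ.continuousOn hmaps).intervalIntegrable

theorem intervalIntegral_greenIntegrand_eq_edges (hα : 0 < α) (hα2 : α < 2) (hc : 0 < c)
    {T : ℝ} (hT : 0 ≤ T) :
    ∫ t in (0 : ℝ)..T, greenIntegrand α c x t =
      (∫ t in (0 : ℝ)..T, greenIntegrand α c x (t + T * I))
        - I • (∫ y in (0 : ℝ)..T, greenIntegrand α c x (T + y * I))
        + I • ∫ y in (0 : ℝ)..T, greenIntegrand α c x (y * I) := by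
  have hsquare := Complex.integral_boundary_rect_eq_zero_of_continuousOn_of_differentiableOn
    (greenIntegrand α c x) 0 (T + T * I) ?_ ?_
  · simp only [Complex.zero_re, Complex.zero_im, Complex.add_re, Complex.add_im,
      Complex.ofReal_re, Complex.ofReal_im, Complex.mul_re, Complex.mul_im, Complex.I_re,
      Complex.I_im, Complex.ofReal_zero, zero_mul, add_zero, mul_zero, mul_one, sub_zero,
      zero_add] at hsquare
    linear_combination hsquare
  · refine (continuousOn_greenIntegrand hα hα2 hc).mono fun z hz => ?_
    simp_all [Complex.mem_reProdIm]
  · refine (differentiableOn_greenIntegrand hα hα2 hc).mono fun z hz => ?_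
    simp_all [Complex.mem_reProdIm]

theorem re_intervalIntegral_greenIntegrand_ofReal (hα : 0 < α) (hα2 : α < 2) (hc : 0 < c)
    {T : ℝ} (hT : 0 ≤ T) :
    (∫ t in (0 : ℝ)..T, greenIntegrand α c x t).re =
      ∫ t in (0 : ℝ)..T, Real.cos (t * x) / (c + t ^ α) := by
  have hint := intervalIntegrable_greenIntegrand_comp (x := x) (T := T) hα hα2 hc
    Complex.continuous_ofReal fun t ht => by simp_all
  rw [← Complex.reCLM_apply, ← Complex.reCLM.intervalIntegral_comp_comm hint]
  refine intervalIntegral.integral_congr fun t ht => ?_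
  rw [uIcc_of_le hT] at ht
  exact re_greenIntegrand_ofReal ht.1

theorem re_I_smul_intervalIntegral_greenIntegrand_mul_I (hα : 0 < α) (hα2 : α < 2)
    (hc : 0 < c) {T : ℝ} (hT : 0 ≤ T) :
    (I • ∫ y in (0 : ℝ)..T, greenIntegrand α c x (y * I)).re =
      Real.sin (π * α / 2) * ∫ y in (0 : ℝ)..T, greenLaplaceDensity α c x y := by
  have hint := intervalIntegrable_greenIntegrand_comp (x := x) (T := T) hα hα2 hc
    (by fun_prop : Continuous fun y : ℝ => (y : ℂ) * I) fun y hy => by simp_all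
  rw [smul_eq_mul, Complex.I_mul_re, ← Complex.imCLM_apply,
    ← Complex.imCLM.intervalIntegral_comp_comm hint,
    ← intervalIntegral.integral_const_mul, ← intervalIntegral.integral_neg]
  refine intervalIntegral.integral_congr_ae (ae_of_all _ fun y hy => ?_)
  rw [uIoc_of_le hT] at hy
  exact neg_im_greenIntegrand_ofReal_mul_I hy.1

theorem mul_exp_neg_mul_le_inv (hx : 0 < x) (T : ℝ) : T * Real.exp (-x * T) ≤ x⁻¹ := by
  have h := Real.add_one_le_exp (x * T)
  rw [neg_mul, Real.exp_neg, ← div_eq_mul_inv, div_le_iff₀ (Real.exp_pos _), ← div_eq_inv_mul,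
    le_div_iff₀ hx]
  linarith

theorem intervalIntegral_exp_neg_mul_le_inv (hx : 0 < x) {T : ℝ} (hT : 0 ≤ T) :
    ∫ y in (0 : ℝ)..T, Real.exp (-x * y) ≤ x⁻¹ := by
  calc ∫ y in (0 : ℝ)..T, Real.exp (-x * y)
      ≤ ∫ y in Ioi (0 : ℝ), Real.exp (-x * y) := by
        rw [intervalIntegral.integral_of_le hT]
        exact setIntegral_mono_set (exp_neg_integrableOn_Ioi 0 hx)
          (ae_of_all _ fun _ => (Real.exp_pos _).le) Ioc_subset_Ioi_self.eventuallyLE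
    _ = x⁻¹ := by
        rw [integral_exp_mul_Ioi (neg_lt_zero.2 hx)]
        simp [neg_div]

theorem norm_greenIntegrand_le (hα : 0 < α) (hc : 0 ≤ c) {T : ℝ} (hT : 0 ≤ T)
    (hTc : c < T ^ α) {z : ℂ} (hz : T ≤ ‖z‖) :
    ‖greenIntegrand α c x z‖ ≤ Real.exp (-x * z.im) / (T ^ α - c) := by
  have hden : T ^ α - c ≤ ‖(c : ℂ) + z ^ (α : ℂ)‖ := by
    have hpow : T ^ α ≤ ‖z ^ (α : ℂ)‖ :=
      Complex.norm_cpow_real z α ▸ Real.rpow_le_rpow hT hz hα.le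
    have := norm_sub_norm_le (z ^ (α : ℂ)) (-c)
    rw [norm_neg, Complex.norm_real, Real.norm_of_nonneg hc, sub_neg_eq_add, add_comm] at this
    linarith
  have hre : (I * z * x).re = -x * z.im := by simp [Complex.mul_re]; ring
  rw [greenIntegrand, norm_div, Complex.norm_exp, hre]
  gcongr

theorem norm_intervalIntegral_greenIntegrand_top_le (hα : 0 < α) (hc : 0 ≤ c) (hx : 0 < x)
    {T : ℝ} (hT : 0 ≤ T) (hTc : c < T ^ α) :
    ‖∫ t in (0 : ℝ)..T, greenIntegrand α c x (t + T * I)‖ ≤ (x * (T ^ α - c))⁻¹ := by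
  have hbound : ∀ t ∈ uIoc (0 : ℝ) T,
      ‖greenIntegrand α c x (t + T * I)‖ ≤ Real.exp (-x * T) / (T ^ α - c) := fun t _ => by
    simpa using norm_greenIntegrand_le hα hc hT hTc (z := t + T * I)
      (by simpa [abs_of_nonneg hT] using Complex.abs_im_le_norm (t + T * I))
  calc ‖∫ t in (0 : ℝ)..T, greenIntegrand α c x (t + T * I)‖
      ≤ Real.exp (-x * T) / (T ^ α - c) * |T - 0| :=
        intervalIntegral.norm_integral_le_of_norm_le_const hbound
    _ = T * Real.exp (-x * T) / (T ^ α - c) := by rw [sub_zero, abs_of_nonneg hT]; ring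
    _ ≤ x⁻¹ / (T ^ α - c) :=
        div_le_div_of_nonneg_right (mul_exp_neg_mul_le_inv hx T) (by linarith)
    _ = (x * (T ^ α - c))⁻¹ := by rw [mul_inv, div_eq_mul_inv]

theorem norm_intervalIntegral_greenIntegrand_right_le (hα : 0 < α) (hc : 0 ≤ c) (hx : 0 < x)
    {T : ℝ} (hT : 0 ≤ T) (hTc : c < T ^ α) :
    ‖∫ y in (0 : ℝ)..T, greenIntegrand α c x (T + y * I)‖ ≤ (x * (T ^ α - c))⁻¹ := by
  have hbound : ∀ᵐ y : ℝ ∂volume.restrict (uIoc (0 : ℝ) T),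
      ‖greenIntegrand α c x (T + y * I)‖ ≤ Real.exp (-x * y) / (T ^ α - c) :=
    ae_of_all _ fun y => by
      simpa using norm_greenIntegrand_le hα hc hT hTc (z := T + y * I)
        (by simpa [abs_of_nonneg hT] using Complex.abs_re_le_norm (T + y * I))
  calc ‖∫ y in (0 : ℝ)..T, greenIntegrand α c x (T + y * I)‖
      ≤ |∫ y in (0 : ℝ)..T, Real.exp (-x * y) / (T ^ α - c)| :=
        intervalIntegral.norm_integral_le_abs_of_norm_le hbound
          (Continuous.intervalIntegrable (by fun_prop) _ _)
    _ = (∫ y in (0 : ℝ)..T, Real.exp (-x * y)) / (T ^ α - c) := by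
        rw [intervalIntegral.integral_div, abs_of_nonneg]
        exact div_nonneg (intervalIntegral.integral_nonneg hT fun y _ => (Real.exp_pos _).le)
          (by linarith)
    _ ≤ x⁻¹ / (T ^ α - c) :=
        div_le_div_of_nonneg_right (intervalIntegral_exp_neg_mul_le_inv hx hT) (by linarith)
    _ = (x * (T ^ α - c))⁻¹ := by rw [mul_inv, div_eq_mul_inv]

theorem tendsto_intervalIntegral_greenIntegrand_edges (hα : 0 < α) (hc : 0 ≤ c) (hx : 0 < x) :
    Tendsto (fun T : ℝ => (∫ t in (0 : ℝ)..T, greenIntegrand α c x (t + T * I))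
      - I • ∫ y in (0 : ℝ)..T, greenIntegrand α c x (T + y * I)) atTop (nhds 0) := by
  have hlarge : ∀ᶠ T : ℝ in atTop, 0 ≤ T ∧ c < T ^ α :=
    (eventually_ge_atTop 0).and ((tendsto_rpow_atTop hα).eventually_gt_atTop c)
  have hbound : Tendsto (fun T : ℝ => (x * (T ^ α - c))⁻¹) atTop (nhds 0) :=
    ((tendsto_atTop_add_const_right atTop (-c) (tendsto_rpow_atTop hα)).const_mul_atTop
      hx).inv_tendsto_atTop.congr fun T => by simp [sub_eq_add_neg]
  have htop := squeeze_zero_norm' (hlarge.mono fun T hT =>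
    norm_intervalIntegral_greenIntegrand_top_le hα hc hx hT.1 hT.2) hbound
  have hright := squeeze_zero_norm' (hlarge.mono fun T hT =>
    norm_intervalIntegral_greenIntegrand_right_le hα hc hx hT.1 hT.2) hbound
  simpa using htop.sub (hright.const_smul I)

theorem integrableOn_greenLaplaceDensity (hα : 0 < α) (hα2 : α < 2) (hc : 0 < c) (hx : 0 < x) :
    IntegrableOn (greenLaplaceDensity α c x) (Ioi 0) := by
  have hsin : 0 < Real.sin (π * α / 2) :=
    Real.sin_pos_of_pos_of_lt_pi (by positivity) (by nlinarith [Real.pi_pos])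
  set δ := c ^ 2 * Real.sin (π * α / 2) ^ 2
  have hδ : 0 < δ := by positivity
  have hmajorant :
      IntegrableOn (fun t : ℝ => δ⁻¹ * (t ^ α * Real.exp (-x * t))) (Ioi 0) := by
    have h := integrableOn_rpow_mul_exp_neg_mul_rpow (s := α) (by linarith) one_pos hx
    simp only [Real.rpow_one] at h
    exact h.const_mul δ⁻¹
  refine hmajorant.mono' (by unfold greenLaplaceDensity; fun_prop) ?_
  filter_upwards [ae_restrict_mem measurableSet_Ioi] with t (ht : 0 < t)
  have hden : δ ≤ c ^ 2 + 2 * c * Real.cos (π * α / 2) * t ^ α + t ^ (2 * α) := by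
    rw [mul_comm 2 α, Real.rpow_mul ht.le, Real.rpow_two]
    nlinarith [sq_nonneg (t ^ α + c * Real.cos (π * α / 2)),
      Real.sin_sq_add_cos_sq (π * α / 2)]
  have htα : 0 ≤ t ^ α := Real.rpow_nonneg ht.le α
  have hnonneg : 0 ≤ greenLaplaceDensity α c x t :=
    mul_nonneg (Real.exp_pos _).le (div_nonneg htα (hδ.trans_le hden).le)
  rw [Real.norm_of_nonneg hnonneg]
  calc greenLaplaceDensity α c x t ≤ Real.exp (-t * x) * (t ^ α / δ) := by
        unfold greenLaplaceDensity; gcongr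
    _ = δ⁻¹ * (t ^ α * Real.exp (-x * t)) := by rw [show -t * x = -x * t by ring]; ring

theorem intervalIntegral_cos_div_add_rpow_eq (hα : 0 < α) (hα2 : α < 2) (hc : 0 < c)
    {T : ℝ} (hT : 0 ≤ T) :
    ∫ t in (0 : ℝ)..T, Real.cos (t * x) / (c + t ^ α) =
      Real.sin (π * α / 2) * (∫ t in (0 : ℝ)..T, greenLaplaceDensity α c x t) +
        ((∫ t in (0 : ℝ)..T, greenIntegrand α c x (t + T * I))
          - I • ∫ y in (0 : ℝ)..T, greenIntegrand α c x (T + y * I)).re := by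
  rw [← re_intervalIntegral_greenIntegrand_ofReal hα hα2 hc hT,
    intervalIntegral_greenIntegrand_eq_edges hα hα2 hc hT, Complex.add_re,
    re_I_smul_intervalIntegral_greenIntegrand_mul_I hα hα2 hc hT, add_comm]

theorem tendsto_intervalIntegral_cos_div_add_rpow (hα : 0 < α) (hα2 : α < 2) (hc : 0 < c)
    (hx : 0 < x) :
    Tendsto (fun T : ℝ => ∫ t in (0 : ℝ)..T, Real.cos (t * x) / (c + t ^ α)) atTop
      (nhds (Real.sin (π * α / 2) * ∫ t in Ioi 0, greenLaplaceDensity α c x t)) := by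
  have hmain := (intervalIntegral_tendsto_integral_Ioi 0
    (integrableOn_greenLaplaceDensity hα hα2 hc hx) tendsto_id).const_mul (Real.sin (π * α / 2))
  have hedges := (Complex.continuous_re.tendsto 0).comp
    (tendsto_intervalIntegral_greenIntegrand_edges (x := x) hα hc.le hx)
  rw [Function.comp_def, Complex.zero_re] at hedges
  simpa using (hmain.add hedges).congr' <| (eventually_ge_atTop 0).mono fun T hT =>
    (intervalIntegral_cos_div_add_rpow_eq hα hα2 hc hT).symm

end

/-- For `α ∈ (0,2)` and `c > 0`, the Green function on the line
`H_{α,c}(x) = (1/π) lim_{T→∞} ∫_0^T cos(tx)/(c + t^α) dt` admits, for every `x > 0`, the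
absolutely convergent Laplace-type representation
`H_{α,c}(x) = (sin(πα/2)/π) ∫_0^∞ e^{-tx} t^α / (c² + 2c cos(πα/2) t^α + t^{2α}) dt`. -/
theorem green_line_laplace_representation (α c : ℝ) (hα : 0 < α) (hα2 : α < 2) (hc : 0 < c)
    (H : ℝ → ℝ)
    (hH : ∀ x : ℝ, 0 < x →
      Tendsto (fun T : ℝ => (1 / Real.pi) * ∫ t in (0 : ℝ)..T, Real.cos (t * x) / (c + t ^ α))
        atTop (nhds (H x))) :
    ∀ x : ℝ, 0 < x →
      IntegrableOn (fun t : ℝ =>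
        Real.exp (-t * x) *
          (t ^ α / (c ^ 2 + 2 * c * Real.cos (Real.pi * α / 2) * t ^ α + t ^ (2 * α))))
        (Set.Ioi 0) ∧
      H x = (Real.sin (Real.pi * α / 2) / Real.pi) *
        ∫ t in Set.Ioi (0 : ℝ),
          Real.exp (-t * x) *
            (t ^ α / (c ^ 2 + 2 * c * Real.cos (Real.pi * α / 2) * t ^ α + t ^ (2 * α))) := by
  intro x hx
  refine ⟨integrableOn_greenLaplaceDensity hα hα2 hc hx, tendsto_nhds_unique (hH x hx) ?_⟩
  convert (tendsto_intervalIntegral_cos_div_add_rpow hα hα2 hc hx).const_mul (1 / π) using 2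
  unfold greenLaplaceDensity
  ring
end

section
/- Let α ∈ (0,2), c > 0 and n ≥ 0 an integer. Define F_n(x) := H_{α,c}(x + 2nπ) + H_{α,c}(2(n+1)π - x) for x ∈ (0,π). Then F_n is infinitely differentiable on (0,π), its even-order derivatives are strictly positive and its odd-order derivatives are strictly negative: for every integer p ≥ 0 and every x ∈ (0,π), F_n^{(2p)}(x) > 0 and F_n^{(2p+1)}(x) < 0. -/
open Filter Set MeasureTheory Complex

noncomputable section GreenAux
namespace GreenAux

/-- The angle `θ = απ/2`. -/
def th (α : ℝ) : ℝ := α * Real.pi / 2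

/-- The density of the Laplace representation of the Green function. -/
def rho (α c : ℝ) (y : ℝ) : ℝ := (Complex.I / ((c : ℂ) + ((y : ℂ) * Complex.I) ^ (α : ℂ))).re

/-- The constant `κ`. -/
def kap (α : ℝ) : ℝ := Real.sqrt ((1 + Real.cos (th α)) / 2)

variable {α c : ℝ}

lemma th_pos (hα : 0 < α) : 0 < th α := by
  have := Real.pi_pos
  unfold th; positivity

lemma th_lt_pi (hα2 : α < 2) : th α < Real.pi := by
  have := Real.pi_pos
  unfold th; nlinarith

lemma sin_th_pos (hα : 0 < α) (hα2 : α < 2) : 0 < Real.sin (th α) :=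
  Real.sin_pos_of_pos_of_lt_pi (th_pos hα) (th_lt_pi hα2)

lemma neg_one_lt_cos_th (hα : 0 < α) (hα2 : α < 2) : -1 < Real.cos (th α) := by
  nlinarith [sin_th_pos hα hα2, Real.sin_sq_add_cos_sq (th α)]

lemma kap_pos (hα : 0 < α) (hα2 : α < 2) : 0 < kap α := by
  have := neg_one_lt_cos_th hα hα2
  unfold kap
  exact Real.sqrt_pos.2 (by linarith)

lemma kap_sq (hα : 0 < α) (hα2 : α < 2) : kap α ^ 2 = (1 + Real.cos (th α)) / 2 := by
  have := neg_one_lt_cos_th hα hα2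
  rw [kap, Real.sq_sqrt (by linarith)]

/-- Main quadratic estimate: if `re w ≥ |w| cos θ` then `|c+w|² ≥ κ²(c²+|w|²)`. -/
lemma sq_bound (hα : 0 < α) (hα2 : α < 2) (hc : 0 < c) {w : ℂ}
    (hw : ‖w‖ * Real.cos (th α) ≤ w.re) :
    kap α ^ 2 * (c ^ 2 + ‖w‖ ^ 2) ≤ ‖(c : ℂ) + w‖ ^ 2 := by
  have hq1 : -1 < Real.cos (th α) := neg_one_lt_cos_th hα hα2
  have hq2 : Real.cos (th α) ≤ 1 := Real.cos_le_one _
  have e1 : ‖(c : ℂ) + w‖ ^ 2 = (c + w.re) ^ 2 + w.im ^ 2 := by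
    rw [Complex.sq_norm, Complex.normSq_apply]; simp; ring
  have e2 : ‖w‖ ^ 2 = w.re ^ 2 + w.im ^ 2 := by
    rw [Complex.sq_norm, Complex.normSq_apply]; ring
  have hr : 0 ≤ ‖w‖ := norm_nonneg w
  rw [kap_sq hα hα2, e1]
  nlinarith [sq_nonneg (c - ‖w‖), mul_nonneg hc.le hr,
    mul_le_mul_of_nonneg_left hw hc.le]

lemma abs_add_ge_c (hα : 0 < α) (hα2 : α < 2) (hc : 0 < c) {w : ℂ}
    (hw : ‖w‖ * Real.cos (th α) ≤ w.re) :
    kap α * c ≤ ‖(c : ℂ) + w‖ := by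
  have h := sq_bound hα hα2 hc hw
  have hκ := kap_pos hα hα2
  nlinarith [norm_nonneg ((c : ℂ) + w), sq_nonneg (‖w‖),
    mul_pos hκ hc]

lemma abs_add_ge_abs (hα : 0 < α) (hα2 : α < 2) (hc : 0 < c) {w : ℂ}
    (hw : ‖w‖ * Real.cos (th α) ≤ w.re) :
    kap α * ‖w‖ ≤ ‖(c : ℂ) + w‖ := by
  have h := sq_bound hα hα2 hc hw
  have hκ := kap_pos hα hα2
  nlinarith [norm_nonneg ((c : ℂ) + w), norm_nonneg w, sq_nonneg c,
    mul_nonneg hκ.le (norm_nonneg w)]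

/-- For `z` in the closed first quadrant, `re (z^α) ≥ |z^α| cos θ`. -/
lemma re_cpow_ge (hα : 0 < α) (hα2 : α < 2) {z : ℂ} (h1 : 0 ≤ z.re) (h2 : 0 ≤ z.im) :
    ‖z ^ (α : ℂ)‖ * Real.cos (th α) ≤ (z ^ (α : ℂ)).re := by
  rcases eq_or_ne z 0 with rfl | hz
  · rw [Complex.zero_cpow (by exact_mod_cast hα.ne')]
    simp
  · have harg0 : 0 ≤ z.arg := Complex.arg_nonneg_iff.2 h2
    have harg1 : z.arg ≤ Real.pi / 2 := Complex.arg_le_pi_div_two_iff.2 (Or.inl h1)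
    have habs : 0 < ‖z‖ := norm_pos_iff.mpr hz
    have hcpow : z ^ (α : ℂ) = Complex.exp (Complex.log z * α) :=
      Complex.cpow_def_of_ne_zero hz α
    have him : (Complex.log z * (α : ℂ)).im = z.arg * α := by
      simp [Complex.mul_im, Complex.log_im, Complex.log_re]
    have hre : (Complex.log z * (α : ℂ)).re = Real.log (‖z‖) * α := by
      simp [Complex.mul_re, Complex.log_im, Complex.log_re]
    have habs2 : ‖z ^ (α : ℂ)‖ = Real.exp (Real.log (‖z‖) * α) := by
      rw [hcpow, Complex.norm_exp, hre]
    have hre2 : (z ^ (α : ℂ)).re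
        = Real.exp (Real.log (‖z‖) * α) * Real.cos (z.arg * α) := by
      rw [hcpow, Complex.exp_re, hre, him]
    rw [habs2, hre2]
    have hcos : Real.cos (th α) ≤ Real.cos (z.arg * α) := by
      apply Real.cos_le_cos_of_nonneg_of_le_pi
      · positivity
      · exact (th_lt_pi hα2).le
      · rw [th]
        calc z.arg * α ≤ Real.pi / 2 * α :=
              mul_le_mul_of_nonneg_right harg1 hα.le
          _ = α * Real.pi / 2 := by ring
    exact mul_le_mul_of_nonneg_left hcos (Real.exp_pos _).le

/-- Lower bound for the denominator on the closed first quadrant. -/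
lemma denom_ge_c (hα : 0 < α) (hα2 : α < 2) (hc : 0 < c) {z : ℂ}
    (h1 : 0 ≤ z.re) (h2 : 0 ≤ z.im) :
    kap α * c ≤ ‖(c : ℂ) + z ^ (α : ℂ)‖ :=
  abs_add_ge_c hα hα2 hc (re_cpow_ge hα hα2 h1 h2)

lemma denom_ne_zero (hα : 0 < α) (hα2 : α < 2) (hc : 0 < c) {z : ℂ}
    (h1 : 0 ≤ z.re) (h2 : 0 ≤ z.im) :
    (c : ℂ) + z ^ (α : ℂ) ≠ 0 := by
  have := denom_ge_c hα hα2 hc h1 h2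
  have hκ := kap_pos hα hα2
  intro h
  rw [h] at this
  simp at this
  nlinarith

lemma denom_ge_abs (hα : 0 < α) (hα2 : α < 2) (hc : 0 < c) {z : ℂ}
    (h1 : 0 ≤ z.re) (h2 : 0 ≤ z.im) :
    kap α * ‖z‖ ^ α ≤ ‖(c : ℂ) + z ^ (α : ℂ)‖ := by
  have := abs_add_ge_abs hα hα2 hc (re_cpow_ge hα hα2 h1 h2)
  rwa [Complex.norm_cpow_real] at this

/-- value of `(yI)^α` for `y > 0`. -/
lemma cpow_yI (hα : 0 < α) {y : ℝ} (hy : 0 < y) :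
    ((y : ℂ) * Complex.I) ^ (α : ℂ)
      = ((y ^ α : ℝ) : ℂ) * Complex.exp ((th α : ℝ) * Complex.I) := by
  have hz : (y : ℂ) * Complex.I ≠ 0 := by
    simp [Complex.ext_iff, hy.ne']
  have habs : ‖(y : ℂ) * Complex.I‖ = y := by
    simp [abs_of_pos hy]
  have harg : ((y : ℂ) * Complex.I).arg = Real.pi / 2 := by
    rw [Complex.arg_eq_pi_div_two_iff]
    constructor <;> simp [hy]
  rw [Complex.cpow_def_of_ne_zero hz, Complex.log, habs, harg]
  rw [add_mul, Complex.exp_add]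
  congr 1
  · rw [show ((Real.log y : ℂ)) * (α : ℂ) = ((Real.log y * α : ℝ) : ℂ) by push_cast; ring,
      ← Complex.ofReal_exp, Real.rpow_def_of_pos hy]
  · congr 1
    push_cast [th]
    ring

lemma rho_eq (hα : 0 < α) (hc : 0 < c) {y : ℝ} (hy : 0 < y) :
    rho α c y = y ^ α * Real.sin (th α) /
      Complex.normSq ((c : ℂ) + ((y ^ α : ℝ) : ℂ) * Complex.exp ((th α : ℝ) * Complex.I)) := by
  rw [rho, cpow_yI hα hy]
  set u : ℂ := (c : ℂ) + ((y ^ α : ℝ) : ℂ) * Complex.exp ((th α : ℝ) * Complex.I) with hu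
  have h1 : (Complex.I / u).re = u.im / Complex.normSq u := by
    rw [div_eq_mul_inv, Complex.mul_re, Complex.inv_re, Complex.inv_im]
    simp
    ring
  rw [h1]
  congr 1
  rw [hu]
  simp [Complex.add_im, Complex.mul_im, Complex.exp_ofReal_mul_I_im, Complex.exp_ofReal_mul_I_re]

lemma rho_pos (hα : 0 < α) (hα2 : α < 2) (hc : 0 < c) {y : ℝ} (hy : 0 < y) :
    0 < rho α c y := by
  rw [rho_eq hα hc hy]
  have h1 : 0 < y ^ α := Real.rpow_pos_of_pos hy _
  have h2 := sin_th_pos hα hα2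
  have hz : 0 ≤ ((y : ℂ) * Complex.I).re := by simp
  have hz' : 0 ≤ ((y : ℂ) * Complex.I).im := by simp [hy.le]
  have hne : (c : ℂ) + ((y ^ α : ℝ) : ℂ) * Complex.exp ((th α : ℝ) * Complex.I) ≠ 0 := by
    rw [← cpow_yI hα hy]; exact denom_ne_zero hα hα2 hc hz hz'
  have h3 : 0 < Complex.normSq ((c : ℂ) + ((y ^ α : ℝ) : ℂ)
      * Complex.exp ((th α : ℝ) * Complex.I)) := Complex.normSq_pos.2 hne
  positivity

lemma rho_le (hα : 0 < α) (hα2 : α < 2) (hc : 0 < c) {y : ℝ} (hy : 0 ≤ y) :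
    rho α c y ≤ 1 / (kap α * c) := by
  have hz : 0 ≤ ((y : ℂ) * Complex.I).re := by simp
  have hz' : 0 ≤ ((y : ℂ) * Complex.I).im := by simp [hy]
  have hd := denom_ge_c hα hα2 hc hz hz'
  have hκc : 0 < kap α * c := mul_pos (kap_pos hα hα2) hc
  have h1 : rho α c y ≤ ‖Complex.I / ((c : ℂ) + ((y : ℂ) * Complex.I) ^ (α : ℂ))‖ :=
    Complex.re_le_norm _
  have h2 : ‖Complex.I / ((c : ℂ) + ((y : ℂ) * Complex.I) ^ (α : ℂ))‖
      = 1 / ‖(c : ℂ) + ((y : ℂ) * Complex.I) ^ (α : ℂ)‖ := by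
    rw [norm_div]; simp
  refine h1.trans ?_
  rw [h2]
  apply one_div_le_one_div_of_le hκc hd

lemma rho_contOn (hα : 0 < α) (hα2 : α < 2) (hc : 0 < c) :
    ContinuousOn (rho α c) (Ioi (0 : ℝ)) := by
  apply Complex.continuous_re.comp_continuousOn
  apply ContinuousOn.div continuousOn_const
  · apply continuousOn_const.add
    apply ContinuousOn.cpow
    · exact (Complex.continuous_ofReal.mul continuous_const).continuousOn
    · exact continuousOn_const
    · intro y hy
      rw [Complex.mem_slitPlane_iff]
      right
      simp [ne_of_gt (mem_Ioi.1 hy)]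
  · intro y hy
    have hy' := mem_Ioi.1 hy
    exact denom_ne_zero hα hα2 hc (by simp) (by simp [hy'.le])


lemma int_pow_exp (k : ℕ) {a : ℝ} (ha : 0 < a) :
    IntegrableOn (fun y : ℝ => y ^ k * Real.exp (-(a * y))) (Ioi (0 : ℝ)) := by
  have h := integrableOn_rpow_mul_exp_neg_mul_rpow (p := 1) (s := (k : ℝ)) (b := a)
    (by exact_mod_cast lt_of_lt_of_le neg_one_lt_zero (Nat.cast_nonneg k)) one_pos ha
  apply h.congr_fun ?_ measurableSet_Ioi
  intro y hy
  simp only [Real.rpow_natCast, Real.rpow_one, neg_mul]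

/-- The integrand of the `k`-th derivative. -/
def ker (α c : ℝ) (k : ℕ) (x y : ℝ) : ℝ :=
  ((-1 : ℝ) ^ k * y ^ k * rho α c y) * Real.exp (-(x * y))

lemma ker_contOn (hα : 0 < α) (hα2 : α < 2) (hc : 0 < c) (k : ℕ) (x : ℝ) :
    ContinuousOn (fun y => ker α c k x y) (Ioi (0 : ℝ)) := by
  apply ContinuousOn.mul
  · exact (continuousOn_const.mul (continuousOn_pow k)).mul (rho_contOn hα hα2 hc)
  · exact (Real.continuous_exp.comp (continuous_const.mul continuous_id).neg).continuousOn

lemma ker_norm_le (hα : 0 < α) (hα2 : α < 2) (hc : 0 < c) (k : ℕ) {x b y : ℝ}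
    (hy : y ∈ Ioi (0 : ℝ)) (hb : b ≤ x) :
    ‖ker α c k x y‖ ≤ 1 / (kap α * c) * (y ^ k * Real.exp (-(b * y))) := by
  have hy' := mem_Ioi.1 hy
  have h1 : 0 < rho α c y := rho_pos hα hα2 hc hy'
  have h2 : rho α c y ≤ 1 / (kap α * c) := rho_le hα hα2 hc hy'.le
  have h3 : Real.exp (-(x * y)) ≤ Real.exp (-(b * y)) :=
    Real.exp_le_exp.2 (by nlinarith)
  have h4 : 0 < y ^ k := pow_pos hy' k
  have habs : ‖ker α c k x y‖ = y ^ k * rho α c y * Real.exp (-(x * y)) := by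
    rw [ker, Real.norm_eq_abs, abs_mul, abs_mul, abs_mul, _root_.abs_pow, abs_neg, abs_one,
      one_pow, one_mul, _root_.abs_of_pos h4, _root_.abs_of_pos h1, Real.abs_exp]
  have hκ := kap_pos hα hα2
  rw [habs]
  calc y ^ k * rho α c y * Real.exp (-(x * y))
      ≤ y ^ k * (1 / (kap α * c)) * Real.exp (-(b * y)) := by
        apply mul_le_mul (mul_le_mul_of_nonneg_left h2 h4.le) h3 (Real.exp_pos _).le
        positivity
    _ = 1 / (kap α * c) * (y ^ k * Real.exp (-(b * y))) := by ring

lemma ker_int (hα : 0 < α) (hα2 : α < 2) (hc : 0 < c) (k : ℕ) {x : ℝ} (hx : 0 < x) :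
    IntegrableOn (fun y => ker α c k x y) (Ioi (0 : ℝ)) := by
  apply Integrable.mono' (((int_pow_exp k hx).const_mul (1 / (kap α * c))))
    ((ker_contOn hα hα2 hc k x).aestronglyMeasurable measurableSet_Ioi)
  refine (ae_restrict_iff' measurableSet_Ioi).2 (ae_of_all _ fun y hy => ?_)
  exact ker_norm_le hα hα2 hc k hy le_rfl

/-- `G k` is `(1/π)` times the `k`-th derivative of the Laplace transform of `rho`. -/
def G (α c : ℝ) (k : ℕ) (x : ℝ) : ℝ :=
  (1 / Real.pi) * ∫ y in Ioi (0 : ℝ), ker α c k x y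

lemma hasDerivAt_G (hα : 0 < α) (hα2 : α < 2) (hc : 0 < c) (k : ℕ) {x : ℝ} (hx : 0 < x) :
    HasDerivAt (G α c k) (G α c (k + 1) x) x := by
  have hx2 : 0 < x / 2 := half_pos hx
  have key := hasDerivAt_integral_of_dominated_loc_of_deriv_le (𝕜 := ℝ)
    (μ := volume.restrict (Ioi (0:ℝ)))
    (F := fun x' y => ker α c k x' y) (F' := fun x' y => ker α c (k + 1) x' y)
    (x₀ := x) (s := Metric.ball x (x / 2))
    (bound := fun y => 1 / (kap α * c) * (y ^ (k + 1) * Real.exp (-(x / 2 * y)))) (Metric.ball_mem_nhds x hx2)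
    ?_ ((ker_int hα hα2 hc k hx)) ?_ ?_ ?_ ?_
  · exact (key.2.const_mul (1 / Real.pi))
  · exact Eventually.of_forall fun x' =>
      (ker_contOn hα hα2 hc k x').aestronglyMeasurable measurableSet_Ioi
  · exact (ker_contOn hα hα2 hc (k + 1) x).aestronglyMeasurable measurableSet_Ioi
  · refine (ae_restrict_iff' measurableSet_Ioi).2 (ae_of_all _ fun y hy => fun x' hx' => ?_)
    have h5 : x / 2 ≤ x' := by
      have := abs_sub_lt_iff.1 (mem_ball_iff_norm.1 hx')
      linarith [this.1, this.2]
    exact ker_norm_le hα hα2 hc (k + 1) hy h5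
  · exact (int_pow_exp (k + 1) hx2).const_mul _
  · refine (ae_restrict_iff' measurableSet_Ioi).2 (ae_of_all _ fun y hy => fun x' hx' => ?_)
    have h0 : HasDerivAt (fun x' : ℝ => -(x' * y)) (-y) x' := (hasDerivAt_mul_const y).neg
    have h1 := h0.exp
    have h2 := h1.const_mul ((-1 : ℝ) ^ k * y ^ k * rho α c y)
    exact h2.congr_deriv (by unfold ker; ring)

lemma ipos {h : ℝ → ℝ} (hint : IntegrableOn h (Ioi (0 : ℝ)))
    (hpos : ∀ y ∈ Ioi (0 : ℝ), 0 < h y) : 0 < ∫ y in Ioi (0 : ℝ), h y := by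
  rw [setIntegral_pos_iff_support_of_nonneg_ae
    ((ae_restrict_iff' measurableSet_Ioi).2 (ae_of_all _ fun y hy => (hpos y hy).le)) hint]
  have hsub : Ioi (0 : ℝ) ⊆ Function.support h ∩ Ioi 0 :=
    fun y hy => ⟨fun h0 => (hpos y hy).ne' h0, hy⟩
  calc (0 : ENNReal) < volume (Ioi (0 : ℝ)) := by simp [Real.volume_Ioi]
    _ ≤ volume (Function.support h ∩ Ioi 0) := measure_mono hsub

lemma G_even_pos (hα : 0 < α) (hα2 : α < 2) (hc : 0 < c) (p : ℕ) {x : ℝ} (hx : 0 < x) :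
    0 < G α c (2 * p) x := by
  have h1 : 0 < ∫ y in Ioi (0 : ℝ), ker α c (2 * p) x y := by
    apply ipos (ker_int hα hα2 hc _ hx)
    intro y hy
    have hy' := mem_Ioi.1 hy
    have : ((-1 : ℝ)) ^ (2 * p) = 1 := (even_two_mul p).neg_one_pow
    rw [ker, this]
    have := rho_pos hα hα2 hc hy'
    have := pow_pos hy' (2 * p)
    positivity
  have hπ := Real.pi_pos
  rw [G]
  positivity

lemma G_odd_lt (hα : 0 < α) (hα2 : α < 2) (hc : 0 < c) {k : ℕ} (hk : Odd k)
    {a b : ℝ} (ha : 0 < a) (hab : a < b) : G α c k a < G α c k b := by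
  have hb : 0 < b := ha.trans hab
  have hπ := Real.pi_pos
  have hdiff : 0 < ∫ y in Ioi (0 : ℝ), (ker α c k b y - ker α c k a y) := by
    apply ipos ((ker_int hα hα2 hc k hb).sub (ker_int hα hα2 hc k ha))
    intro y hy
    have hy' := mem_Ioi.1 hy
    have hneg : ((-1 : ℝ)) ^ k = -1 := hk.neg_one_pow
    have hexp : Real.exp (-(b * y)) < Real.exp (-(a * y)) := by
      apply Real.exp_lt_exp.2; nlinarith
    have hρ := rho_pos hα hα2 hc hy'
    have hyk := pow_pos hy' k
    simp only [Pi.sub_apply, ker, hneg]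
    have h9 := mul_pos (mul_pos hyk hρ) (sub_pos.2 hexp)
    have h10 : -1 * y ^ k * rho α c y * Real.exp (-(b * y)) -
        -1 * y ^ k * rho α c y * Real.exp (-(a * y))
        = y ^ k * rho α c y * (Real.exp (-(a * y)) - Real.exp (-(b * y))) := by ring
    linarith [h9, h10]
  have : G α c k b - G α c k a
      = (1 / Real.pi) * ∫ y in Ioi (0 : ℝ), (ker α c k b y - ker α c k a y) := by
    rw [integral_sub (ker_int hα hα2 hc k hb) (ker_int hα hα2 hc k ha), G, G]
    ring
  have h2 := mul_pos (by positivity : (0:ℝ) < 1 / Real.pi) hdiff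
  linarith

lemma exp_int {a : ℝ} (ha : 0 < a) :
    IntegrableOn (fun y : ℝ => Real.exp (-(a * y))) (Ioi (0 : ℝ)) := by
  have := int_pow_exp 0 ha
  simpa using this

/-- The complex contour integrand. -/
def f (α c x : ℝ) (z : ℂ) : ℂ :=
  Complex.exp (z * (x : ℂ) * Complex.I) / ((c : ℂ) + z ^ (α : ℂ))

lemma f_re_aux (z : ℂ) (x : ℝ) : (z * (x : ℂ) * Complex.I).re = -(z.im * x) := by
  simp [Complex.mul_re, Complex.mul_im]

lemma f_norm_le (hα : 0 < α) (hα2 : α < 2) (hc : 0 < c) (x : ℝ) {z : ℂ}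
    (h1 : 0 ≤ z.re) (h2 : 0 ≤ z.im) :
    ‖f α c x z‖ ≤ Real.exp (-(z.im * x)) / (kap α * c) := by
  rw [f, norm_div, Complex.norm_exp, f_re_aux]
  have h3 := denom_ge_c hα hα2 hc h1 h2
  have h4 := mul_pos (kap_pos hα hα2) hc
  gcongr

lemma f_norm_le' (hα : 0 < α) (hα2 : α < 2) (hc : 0 < c) (x : ℝ) {z : ℂ}
    (h1 : 0 ≤ z.re) (h2 : 0 ≤ z.im) (hz : z ≠ 0) :
    ‖f α c x z‖ ≤ Real.exp (-(z.im * x)) / (kap α * ‖z‖ ^ α) := by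
  rw [f, norm_div, Complex.norm_exp, f_re_aux]
  have h3 := denom_ge_abs hα hα2 hc h1 h2
  have h4 : 0 < kap α * ‖z‖ ^ α :=
    mul_pos (kap_pos hα hα2) (Real.rpow_pos_of_pos (norm_pos_iff.mpr hz) α)
  gcongr

lemma f_diffAt (hα : 0 < α) (hα2 : α < 2) (hc : 0 < c) (x : ℝ) {z : ℂ}
    (h1 : 0 ≤ z.re) (h2 : 0 ≤ z.im) (hz : z ≠ 0) :
    DifferentiableAt ℂ (f α c x) z := by
  have hslit : z ∈ Complex.slitPlane := by
    rw [Complex.mem_slitPlane_iff]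
    rcases lt_or_eq_of_le h1 with h | h
    · exact Or.inl h
    · right
      intro h0
      exact hz (Complex.ext h.symm h0)
  have hpow : DifferentiableAt ℂ (fun z : ℂ => z ^ (α : ℂ)) z :=
    differentiableAt_id.cpow (differentiableAt_const _) hslit
  have hden : DifferentiableAt ℂ (fun z : ℂ => (c : ℂ) + z ^ (α : ℂ)) z :=
    (differentiableAt_const _).add hpow
  have hnum : DifferentiableAt ℂ (fun z : ℂ => Complex.exp (z * (x : ℂ) * Complex.I)) z :=
    ((differentiableAt_id.mul_const _).mul_const _).cexp
  exact hnum.div hden (denom_ne_zero hα hα2 hc h1 h2)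

lemma f_contOn (hα : 0 < α) (hα2 : α < 2) (hc : 0 < c) (x : ℝ) :
    ContinuousOn (f α c x) {z : ℂ | 0 ≤ z.re ∧ 0 ≤ z.im} := by
  have hα' : (α : ℂ) ≠ 0 := by exact_mod_cast hα.ne'
  intro z hz
  rcases eq_or_ne z 0 with rfl | hzz
  · -- continuity at 0
    apply ContinuousAt.continuousWithinAt
    have hpow : Tendsto (fun z : ℂ => z ^ (α : ℂ)) (nhds 0) (nhds 0) := by
      have hb : ∀ w : ℂ, ‖w ^ (α : ℂ)‖ ≤ ‖w‖ ^ α := fun w =>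
        le_of_eq (by rw [Complex.norm_cpow_real])
      refine squeeze_zero_norm hb ?_
      have hcont : ContinuousAt (fun r : ℝ => r ^ α) 0 :=
        Real.continuousAt_rpow_const 0 α (Or.inr hα.le)
      have habs : Tendsto (fun z : ℂ => ‖z‖) (nhds 0) (nhds 0) := by
        simpa using (continuous_norm (E := ℂ)).tendsto 0
      have h2 := Filter.Tendsto.comp hcont habs
      simpa [Real.zero_rpow hα.ne', Function.comp_def] using h2
    have hden : Tendsto (fun z : ℂ => (c : ℂ) + z ^ (α : ℂ)) (nhds 0) (nhds (c : ℂ)) := by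
      simpa using tendsto_const_nhds.add hpow
    have hnum : Tendsto (fun z : ℂ => Complex.exp (z * (x : ℂ) * Complex.I)) (nhds 0)
        (nhds 1) := by
      have : Continuous (fun z : ℂ => Complex.exp (z * (x : ℂ) * Complex.I)) := by
        continuity
      simpa using this.tendsto 0
    have hc' : (c : ℂ) ≠ 0 := by exact_mod_cast hc.ne'
    have h9 := hnum.div hden hc'
    have hf0 : f α c x 0 = 1 / (c : ℂ) := by simp [f, Complex.zero_cpow hα']
    unfold ContinuousAt
    rw [hf0]
    exact h9
  · exact (f_diffAt hα hα2 hc x hz.1 hz.2 hzz).continuousAt.continuousWithinAt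

lemma f_intOn_left (hα : 0 < α) (hα2 : α < 2) (hc : 0 < c) {x : ℝ} (hx : 0 < x) :
    IntegrableOn (fun y : ℝ => f α c x ((y : ℂ) * Complex.I)) (Ioi (0 : ℝ)) := by
  apply Integrable.mono' ((exp_int hx).const_mul (1 / (kap α * c)))
  · apply ContinuousOn.aestronglyMeasurable ?_ measurableSet_Ioi
    apply (f_contOn hα hα2 hc x).comp
      ((Complex.continuous_ofReal.mul continuous_const).continuousOn)
    intro y hy
    exact ⟨by simp, by simpa using (mem_Ioi.1 hy).le⟩
  · refine (ae_restrict_iff' measurableSet_Ioi).2 (ae_of_all _ fun y hy => ?_)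
    have h := f_norm_le hα hα2 hc x (z := (y : ℂ) * Complex.I) (by simp)
      (by simpa using (mem_Ioi.1 hy).le)
    simp only [Complex.mul_I_im, Complex.ofReal_re] at h
    calc ‖f α c x ((y : ℂ) * Complex.I)‖ ≤ Real.exp (-(y * x)) / (kap α * c) := h
      _ = 1 / (kap α * c) * Real.exp (-(x * y)) := by rw [mul_comm y x]; ring
lemma rect_eq (hα : 0 < α) (hα2 : α < 2) (hc : 0 < c) (x : ℝ) {T : ℝ} (hT : 0 < T) :
    (∫ t in (0:ℝ)..T, f α c x t)
      = (∫ t in (0:ℝ)..T, f α c x (t + T * Complex.I))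
        - Complex.I • (∫ y in (0:ℝ)..T, f α c x (T + y * Complex.I))
        + Complex.I • (∫ y in (0:ℝ)..T, f α c x ((y : ℂ) * Complex.I)) := by
  have key := Complex.integral_boundary_rect_eq_zero_of_differentiable_on_off_countable
    (f α c x) 0 (⟨T, T⟩ : ℂ) ∅ countable_empty ?_ ?_
  · simp only [Complex.zero_re, Complex.zero_im, show ((⟨T, T⟩ : ℂ)).re = T from rfl,
      show ((⟨T, T⟩ : ℂ)).im = T from rfl, Complex.ofReal_zero, zero_mul, add_zero,
      zero_add] at key
    simp only [smul_eq_mul] at key ⊢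
    linear_combination key
  · apply (f_contOn hα hα2 hc x).mono
    intro z hz
    rw [Complex.mem_reProdIm] at hz
    have h1 := hz.1
    have h2 := hz.2
    rw [Complex.zero_re, show ((⟨T, T⟩ : ℂ)).re = T from rfl, uIcc_of_le hT.le] at h1
    rw [Complex.zero_im, show ((⟨T, T⟩ : ℂ)).im = T from rfl, uIcc_of_le hT.le] at h2
    exact ⟨h1.1, h2.1⟩
  · intro z hz
    rw [mem_diff] at hz
    have hz1 := hz.1
    rw [Complex.mem_reProdIm] at hz1
    have h1 := hz1.1
    have h2 := hz1.2
    rw [Complex.zero_re, show ((⟨T, T⟩ : ℂ)).re = T from rfl, min_eq_left hT.le,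
      max_eq_right hT.le] at h1
    rw [Complex.zero_im, show ((⟨T, T⟩ : ℂ)).im = T from rfl, min_eq_left hT.le,
      max_eq_right hT.le] at h2
    have hzne : z ≠ 0 := by
      intro h0
      rw [h0] at h1
      exact absurd h1.1 (by simp)
    exact f_diffAt hα hα2 hc x h1.1.le h2.1.le hzne

lemma aux_texp {x : ℝ} (hx : 0 < x) :
    Tendsto (fun T : ℝ => T * Real.exp (-(T * x))) atTop (nhds 0) := by
  have h1 := Real.tendsto_pow_mul_exp_neg_atTop_nhds_zero 1
  have h2 : Tendsto (fun T : ℝ => x * T) atTop atTop :=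
    Tendsto.const_mul_atTop hx tendsto_id
  have h3 := (h1.comp h2).const_mul (1 / x)
  rw [mul_zero] at h3
  apply h3.congr
  intro T
  simp only [Function.comp]
  rw [pow_one, mul_comm x T]
  field_simp

lemma top_lim (hα : 0 < α) (hα2 : α < 2) (hc : 0 < c) {x : ℝ} (hx : 0 < x) :
    Tendsto (fun T : ℝ => ∫ t in (0:ℝ)..T, f α c x (t + T * Complex.I)) atTop (nhds 0) := by
  have hκc := mul_pos (kap_pos hα hα2) hc
  have hg : Tendsto (fun T : ℝ => 1 / (kap α * c) * (T * Real.exp (-(T * x)))) atTop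
      (nhds 0) := by
    simpa using (aux_texp hx).const_mul (1 / (kap α * c))
  refine squeeze_zero_norm' ?_ hg
  filter_upwards [eventually_gt_atTop (0:ℝ)] with T hT
  have hbd : ∀ t ∈ Set.uIoc (0:ℝ) T, ‖f α c x (t + T * Complex.I)‖
      ≤ Real.exp (-(T * x)) / (kap α * c) := by
    intro t ht
    rw [uIoc_of_le hT.le] at ht
    have h := f_norm_le hα hα2 hc x (z := (t : ℂ) + T * Complex.I)
      (by simpa using ht.1.le) (by simp [hT.le])
    simpa using h
  calc ‖∫ t in (0:ℝ)..T, f α c x (t + T * Complex.I)‖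
      ≤ Real.exp (-(T * x)) / (kap α * c) * |T - 0| :=
        intervalIntegral.norm_integral_le_of_norm_le_const hbd
    _ = 1 / (kap α * c) * (T * Real.exp (-(T * x))) := by
        rw [sub_zero, abs_of_pos hT]; ring


lemma right_lim (hα : 0 < α) (hα2 : α < 2) (hc : 0 < c) {x : ℝ} (hx : 0 < x) :
    Tendsto (fun T : ℝ => ∫ y in (0:ℝ)..T, f α c x ((T : ℂ) + y * Complex.I)) atTop
      (nhds 0) := by
  have hκ := kap_pos hα hα2
  set Cx : ℝ := ∫ y in Ioi (0:ℝ), Real.exp (-(x * y)) with hCx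
  have hg : Tendsto (fun T : ℝ => (kap α * T ^ α)⁻¹ * Cx) atTop (nhds 0) := by
    have h1 : Tendsto (fun T : ℝ => kap α * T ^ α) atTop atTop :=
      Tendsto.const_mul_atTop hκ (tendsto_rpow_atTop hα)
    simpa using h1.inv_tendsto_atTop.mul_const Cx
  refine squeeze_zero_norm' ?_ hg
  filter_upwards [eventually_gt_atTop (0:ℝ)] with T hT
  have hTα : 0 < T ^ α := Real.rpow_pos_of_pos hT α
  have hbd : ∀ y ∈ Icc (0:ℝ) T, ‖f α c x ((T : ℂ) + y * Complex.I)‖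
      ≤ (kap α * T ^ α)⁻¹ * Real.exp (-(x * y)) := by
    intro y hy
    have hz1 : (0:ℝ) ≤ ((T : ℂ) + y * Complex.I).re := by simp [hT.le]
    have hz2 : (0:ℝ) ≤ ((T : ℂ) + y * Complex.I).im := by simp [hy.1]
    have hzne : ((T : ℂ) + y * Complex.I) ≠ 0 := by
      intro h0
      have h2 := congrArg Complex.re h0
      simp at h2
      exact hT.ne' h2
    have h := f_norm_le' hα hα2 hc x hz1 hz2 hzne
    have habs : T ≤ ‖(T : ℂ) + y * Complex.I‖ := by
      have h2 := Complex.abs_re_le_norm ((T : ℂ) + y * Complex.I)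
      rw [show ((T : ℂ) + y * Complex.I).re = T by simp, abs_of_pos hT] at h2
      exact h2
    have hmono : T ^ α ≤ ‖(T : ℂ) + y * Complex.I‖ ^ α :=
      Real.rpow_le_rpow hT.le habs hα.le
    have him : ((T : ℂ) + y * Complex.I).im = y := by simp
    rw [him] at h
    calc ‖f α c x ((T : ℂ) + y * Complex.I)‖
        ≤ Real.exp (-(y * x)) / (kap α * ‖(T : ℂ) + y * Complex.I‖ ^ α) := h
      _ ≤ Real.exp (-(y * x)) / (kap α * T ^ α) := by gcongr
      _ = (kap α * T ^ α)⁻¹ * Real.exp (-(x * y)) := by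
          rw [mul_comm y x]; field_simp
  have hcont : ContinuousOn (fun y : ℝ => f α c x ((T : ℂ) + y * Complex.I))
      (Set.uIcc (0:ℝ) T) := by
    apply (f_contOn hα hα2 hc x).comp
      ((continuous_const.add (Complex.continuous_ofReal.mul continuous_const)).continuousOn)
    intro y hy
    rw [uIcc_of_le hT.le] at hy
    exact ⟨by simp [hT.le], by simpa using hy.1⟩
  have hInt1 : IntervalIntegrable (fun y : ℝ => ‖f α c x ((T : ℂ) + y * Complex.I)‖)
      volume 0 T := hcont.norm.intervalIntegrable
  have hInt2 : IntervalIntegrable (fun y : ℝ => (kap α * T ^ α)⁻¹ * Real.exp (-(x * y)))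
      volume 0 T := (Continuous.intervalIntegrable (by continuity) 0 T)
  calc ‖∫ y in (0:ℝ)..T, f α c x ((T : ℂ) + y * Complex.I)‖
      ≤ ∫ y in (0:ℝ)..T, ‖f α c x ((T : ℂ) + y * Complex.I)‖ :=
        intervalIntegral.norm_integral_le_integral_norm hT.le
    _ ≤ ∫ y in (0:ℝ)..T, (kap α * T ^ α)⁻¹ * Real.exp (-(x * y)) := by
        apply intervalIntegral.integral_mono_on hT.le hInt1 hInt2
        intro y hy
        exact hbd y hy
    _ = (kap α * T ^ α)⁻¹ * ∫ y in (0:ℝ)..T, Real.exp (-(x * y)) := by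
        rw [intervalIntegral.integral_const_mul]
    _ ≤ (kap α * T ^ α)⁻¹ * Cx := by
        have h0 : (0:ℝ) ≤ (kap α * T ^ α)⁻¹ := by positivity
        apply mul_le_mul_of_nonneg_left ?_ h0
        rw [intervalIntegral.integral_of_le hT.le]
        apply setIntegral_mono_set (exp_int hx)
          (ae_of_all _ fun y => (Real.exp_pos _).le)
          (HasSubset.Subset.eventuallyLE Ioc_subset_Ioi_self)

lemma tendsto_f_int (hα : 0 < α) (hα2 : α < 2) (hc : 0 < c) {x : ℝ} (hx : 0 < x) :
    Tendsto (fun T : ℝ => ∫ t in (0:ℝ)..T, f α c x t) atTop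
      (nhds (Complex.I • ∫ y in Ioi (0:ℝ), f α c x ((y : ℂ) * Complex.I))) := by
  have hleft : Tendsto (fun T : ℝ => ∫ y in (0:ℝ)..T, f α c x ((y : ℂ) * Complex.I)) atTop
      (nhds (∫ y in Ioi (0:ℝ), f α c x ((y : ℂ) * Complex.I))) :=
    intervalIntegral_tendsto_integral_Ioi 0 (f_intOn_left hα hα2 hc hx) tendsto_id
  have h := ((top_lim hα hα2 hc hx).sub
      ((right_lim hα hα2 hc hx).const_smul Complex.I)).add
      (hleft.const_smul Complex.I)
  simp only [smul_zero, sub_zero, zero_add] at h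
  apply h.congr'
  filter_upwards [eventually_gt_atTop (0:ℝ)] with T hT
  exact (rect_eq hα hα2 hc x hT).symm

lemma re_I_f (hα : 0 < α) (hα2 : α < 2) (hc : 0 < c) (x : ℝ) {y : ℝ} (hy : 0 < y) :
    (Complex.I * f α c x ((y : ℂ) * Complex.I)).re = ker α c 0 x y := by
  have h1 : (y : ℂ) * Complex.I * (x : ℂ) * Complex.I = ((-(x * y) : ℝ) : ℂ) := by
    have : (y : ℂ) * Complex.I * (x : ℂ) * Complex.I
        = (y : ℂ) * (x : ℂ) * (Complex.I * Complex.I) := by ring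
    rw [this, Complex.I_mul_I]
    push_cast
    ring
  rw [f, h1, ← Complex.ofReal_exp]
  have h2 : Complex.I * (((Real.exp (-(x * y)) : ℝ) : ℂ) / ((c : ℂ) + ((y : ℂ) * Complex.I) ^ (α : ℂ)))
      = ((Real.exp (-(x * y)) : ℝ) : ℂ)
        * (Complex.I / ((c : ℂ) + ((y : ℂ) * Complex.I) ^ (α : ℂ))) := by
    ring
  rw [h2, Complex.re_ofReal_mul]
  simp only [ker, rho, pow_zero, one_mul]
  ring

lemma re_f_real (hα : 0 < α) (hc : 0 < c) (x : ℝ) {t : ℝ} (ht : 0 ≤ t) :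
    (f α c x (t : ℂ)).re = Real.cos (t * x) / (c + t ^ α) := by
  rw [f]
  have h1 : ((t : ℂ)) ^ (α : ℂ) = ((t ^ α : ℝ) : ℂ) := (Complex.ofReal_cpow ht α).symm
  have h2 : (c : ℂ) + ((t ^ α : ℝ) : ℂ) = (((c + t ^ α : ℝ)) : ℂ) := by push_cast; ring
  have h3 : (t : ℂ) * (x : ℂ) * Complex.I = ((t * x : ℝ) : ℂ) * Complex.I := by push_cast; ring
  rw [h1, h2, h3, Complex.div_ofReal_re, Complex.exp_ofReal_mul_I_re]

lemma interval_re (hα : 0 < α) (hα2 : α < 2) (hc : 0 < c) (x : ℝ) {T : ℝ} (hT : 0 ≤ T) :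
    (∫ t in (0:ℝ)..T, f α c x t).re
      = ∫ t in (0:ℝ)..T, Real.cos (t * x) / (c + t ^ α) := by
  have hInt : IntervalIntegrable (fun t : ℝ => f α c x (t : ℂ)) volume 0 T := by
    apply ContinuousOn.intervalIntegrable
    apply (f_contOn hα hα2 hc x).comp Complex.continuous_ofReal.continuousOn
    intro t htt
    rw [uIcc_of_le hT] at htt
    exact ⟨by simpa using htt.1, by simp⟩
  have h4 := Complex.reCLM.intervalIntegral_comp_comm hInt
  simp only [Complex.reCLM_apply] at h4
  rw [← h4]
  apply intervalIntegral.integral_congr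
  intro t htt
  rw [uIcc_of_le hT] at htt
  simpa using re_f_real hα hc x htt.1

lemma tendsto_cos (hα : 0 < α) (hα2 : α < 2) (hc : 0 < c) {x : ℝ} (hx : 0 < x) :
    Tendsto (fun T : ℝ => ∫ t in (0:ℝ)..T, Real.cos (t * x) / (c + t ^ α)) atTop
      (nhds (∫ y in Ioi (0:ℝ), ker α c 0 x y)) := by
  have h1 := (Complex.continuous_re.tendsto _).comp (tendsto_f_int hα hα2 hc hx)
  have hL : (Complex.I • ∫ y in Ioi (0:ℝ), f α c x ((y : ℂ) * Complex.I)).re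
      = ∫ y in Ioi (0:ℝ), ker α c 0 x y := by
    rw [← integral_smul]
    have hsm : Integrable (fun y : ℝ => Complex.I • f α c x ((y : ℂ) * Complex.I))
        (volume.restrict (Ioi (0:ℝ))) := (f_intOn_left hα hα2 hc hx).smul Complex.I
    have h4 := Complex.reCLM.integral_comp_comm hsm
    simp only [Complex.reCLM_apply] at h4
    rw [← h4]
    apply setIntegral_congr_fun measurableSet_Ioi
    intro y hy
    simpa using re_I_f hα hα2 hc x (mem_Ioi.1 hy)
  rw [show nhds (∫ y in Ioi (0:ℝ), ker α c 0 x y)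
      = nhds ((Complex.I • ∫ y in Ioi (0:ℝ), f α c x ((y : ℂ) * Complex.I)).re) by rw [hL]]
  apply h1.congr'
  filter_upwards [eventually_ge_atTop (0:ℝ)] with T hT
  exact interval_re hα hα2 hc x hT

/-- Complex extension of the Laplace transform. -/
def Gc (α c : ℝ) (z : ℂ) : ℂ :=
  ∫ y in Ioi (0:ℝ), Complex.exp (-(z * (y : ℂ))) * ((rho α c y : ℝ) : ℂ)

lemma Gc_contOn (hα : 0 < α) (hα2 : α < 2) (hc : 0 < c) (z : ℂ) :
    ContinuousOn (fun y : ℝ => Complex.exp (-(z * (y : ℂ))) * ((rho α c y : ℝ) : ℂ))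
      (Ioi (0:ℝ)) := by
  apply ContinuousOn.mul
  · exact (Complex.continuous_exp.comp
      ((continuous_const.mul Complex.continuous_ofReal).neg)).continuousOn
  · exact Complex.continuous_ofReal.comp_continuousOn (rho_contOn hα hα2 hc)

lemma Gc_norm (hα : 0 < α) (hα2 : α < 2) (hc : 0 < c) {z : ℂ} {y : ℝ} (hy : y ∈ Ioi (0:ℝ)) :
    ‖Complex.exp (-(z * (y : ℂ))) * ((rho α c y : ℝ) : ℂ)‖
      ≤ 1 / (kap α * c) * Real.exp (-(z.re * y)) := by
  have hy' := mem_Ioi.1 hy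
  have h1 : 0 < rho α c y := rho_pos hα hα2 hc hy'
  have h2 : rho α c y ≤ 1 / (kap α * c) := rho_le hα hα2 hc hy'.le
  rw [norm_mul, Complex.norm_exp,
    Complex.norm_real, Real.norm_eq_abs, abs_of_pos h1]
  have hre : (-(z * (y : ℂ))).re = -(z.re * y) := by
    simp [Complex.mul_re]
  rw [hre]
  calc Real.exp (-(z.re * y)) * rho α c y ≤ Real.exp (-(z.re * y)) * (1 / (kap α * c)) :=
        mul_le_mul_of_nonneg_left h2 (Real.exp_pos _).le
    _ = 1 / (kap α * c) * Real.exp (-(z.re * y)) := by ring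

lemma Gc_int (hα : 0 < α) (hα2 : α < 2) (hc : 0 < c) {z : ℂ} (hz : 0 < z.re) :
    IntegrableOn (fun y : ℝ => Complex.exp (-(z * (y : ℂ))) * ((rho α c y : ℝ) : ℂ))
      (Ioi (0:ℝ)) := by
  apply Integrable.mono' ((exp_int hz).const_mul (1 / (kap α * c)))
    ((Gc_contOn hα hα2 hc z).aestronglyMeasurable measurableSet_Ioi)
  refine (ae_restrict_iff' measurableSet_Ioi).2 (ae_of_all _ fun y hy => ?_)
  exact Gc_norm hα hα2 hc hy

lemma Gc_diffOn (hα : 0 < α) (hα2 : α < 2) (hc : 0 < c) :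
    DifferentiableOn ℂ (Gc α c) {z : ℂ | 0 < z.re} := by
  intro z hz
  have hz' : 0 < z.re := hz
  apply DifferentiableAt.differentiableWithinAt
  have hε : 0 < z.re / 2 := half_pos hz'
  have key := hasDerivAt_integral_of_dominated_loc_of_deriv_le (𝕜 := ℂ)
    (μ := volume.restrict (Ioi (0:ℝ)))
    (F := fun z' (y : ℝ) => Complex.exp (-(z' * (y : ℂ))) * ((rho α c y : ℝ) : ℂ))
    (F' := fun z' (y : ℝ) =>
      (-(y : ℂ)) * Complex.exp (-(z' * (y : ℂ))) * ((rho α c y : ℝ) : ℂ))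
    (x₀ := z) (s := Metric.ball z (z.re / 2))
    (bound := fun y => 1 / (kap α * c) * (y ^ 1 * Real.exp (-(z.re / 2 * y)))) (Metric.ball_mem_nhds z hε)
    ?_ (Gc_int hα hα2 hc hz') ?_ ?_ ?_ ?_
  · exact key.2.differentiableAt
  · exact Eventually.of_forall fun z' =>
      (Gc_contOn hα hα2 hc z').aestronglyMeasurable measurableSet_Ioi
  · apply ContinuousOn.aestronglyMeasurable ?_ measurableSet_Ioi
    exact ((Complex.continuous_ofReal.neg).continuousOn.mul
      ((Complex.continuous_exp.comp
        ((continuous_const.mul Complex.continuous_ofReal).neg)).continuousOn)).mul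
      (Complex.continuous_ofReal.comp_continuousOn (rho_contOn hα hα2 hc))
  · refine (ae_restrict_iff' measurableSet_Ioi).2 (ae_of_all _ fun y hy => fun z' hz'' => ?_)
    have hy' := mem_Ioi.1 hy
    have hre : z.re / 2 ≤ z'.re := by
      have h5 := Complex.abs_re_le_norm (z' - z)
      have h6 : ‖z' - z‖ < z.re / 2 := by
        rw [← Complex.dist_eq] at *
        exact hz''
      have := abs_le.1 (le_of_lt (lt_of_le_of_lt h5 h6))
      simp only [Complex.sub_re] at this
      linarith [this.1]
    have hn : ‖(-(y : ℂ)) * Complex.exp (-(z' * (y : ℂ))) * ((rho α c y : ℝ) : ℂ)‖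
        = y * ‖Complex.exp (-(z' * (y : ℂ))) * ((rho α c y : ℝ) : ℂ)‖ := by
      rw [mul_assoc, norm_mul]
      simp [abs_of_pos hy']
    rw [hn]
    calc y * ‖Complex.exp (-(z' * (y : ℂ))) * ((rho α c y : ℝ) : ℂ)‖
        ≤ y * (1 / (kap α * c) * Real.exp (-(z'.re * y))) := by
          apply mul_le_mul_of_nonneg_left (Gc_norm hα hα2 hc hy) hy'.le
      _ ≤ y * (1 / (kap α * c) * Real.exp (-(z.re / 2 * y))) := by
          have := mul_pos (kap_pos hα hα2) hc
          gcongr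
      _ = 1 / (kap α * c) * (y ^ 1 * Real.exp (-(z.re / 2 * y))) := by ring
  · exact (int_pow_exp 1 hε).const_mul _
  · refine (ae_restrict_iff' measurableSet_Ioi).2 (ae_of_all _ fun y hy => fun z' hz'' => ?_)
    have h0 : HasDerivAt (fun z' : ℂ => -(z' * (y : ℂ))) (-(y : ℂ)) z' :=
      (hasDerivAt_mul_const _).neg
    have h1 := h0.cexp
    have h2 := h1.mul_const ((rho α c y : ℝ) : ℂ)
    exact h2.congr_deriv (by ring)

lemma Gc_analytic (hα : 0 < α) (hα2 : α < 2) (hc : 0 < c) :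
    AnalyticOnNhd ℂ (Gc α c) {z : ℂ | 0 < z.re} :=
  (Gc_diffOn hα hα2 hc).analyticOnNhd (isOpen_lt continuous_const Complex.continuous_re)

lemma Gc_re (hα : 0 < α) (hα2 : α < 2) (hc : 0 < c) {x : ℝ} (hx : 0 < x) :
    (Gc α c (x : ℂ)).re = ∫ y in Ioi (0:ℝ), ker α c 0 x y := by
  have h0 : (((∫ y in Ioi (0:ℝ), ker α c 0 x y : ℝ)) : ℂ)
      = ∫ y in Ioi (0:ℝ), ((ker α c 0 x y : ℝ) : ℂ) := (integral_ofReal (𝕜 := ℂ)).symm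
  have h1 : Gc α c (x : ℂ) = ((∫ y in Ioi (0:ℝ), ker α c 0 x y : ℝ) : ℂ) := by
    rw [Gc, h0]
    apply setIntegral_congr_fun measurableSet_Ioi
    intro y hy
    show Complex.exp (-((x : ℂ) * (y : ℂ))) * ((rho α c y : ℝ) : ℂ)
        = ((ker α c 0 x y : ℝ) : ℂ)
    rw [show (-(((x:ℝ) : ℂ) * (y : ℂ))) = ((-(x * y) : ℝ) : ℂ) by push_cast; ring,
      ← Complex.ofReal_exp, ← Complex.ofReal_mul]
    congr 1
    simp [ker]
    ring
  rw [h1, Complex.ofReal_re]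
end GreenAux
end GreenAux

open GreenAux in
/-- For `α ∈ (0,2)`, `c > 0` and `n ≥ 0`, the function
`F_n(x) = H_{α,c}(x + 2nπ) + H_{α,c}(2(n+1)π - x)` is smooth on `(0, π)`, with strictly
positive even-order derivatives and strictly negative odd-order derivatives. -/
theorem green_line_shifted_derivatives (α c : ℝ) (hα : 0 < α) (hα2 : α < 2) (hc : 0 < c)
    (H : ℝ → ℝ)
    (hH : ∀ x : ℝ, 0 < x →
      Tendsto (fun T : ℝ => (1 / Real.pi) * ∫ t in (0 : ℝ)..T, Real.cos (t * x) / (c + t ^ α))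
        atTop (nhds (H x)))
    (n : ℕ) :
    ContDiffOn ℝ (⊤ : ℕ∞)
      (fun x : ℝ => H (x + 2 * (n : ℝ) * Real.pi) + H (2 * ((n : ℝ) + 1) * Real.pi - x))
      (Set.Ioo 0 Real.pi) ∧
    ∀ p : ℕ, ∀ x ∈ Set.Ioo (0 : ℝ) Real.pi,
      0 < iteratedDerivWithin (2 * p)
          (fun x : ℝ => H (x + 2 * (n : ℝ) * Real.pi) + H (2 * ((n : ℝ) + 1) * Real.pi - x))
          (Set.Ioo 0 Real.pi) x ∧
      iteratedDerivWithin (2 * p + 1)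
          (fun x : ℝ => H (x + 2 * (n : ℝ) * Real.pi) + H (2 * ((n : ℝ) + 1) * Real.pi - x))
          (Set.Ioo 0 Real.pi) x < 0 := by
  have hπ := Real.pi_pos
  set u : ℝ := 2 * (n : ℝ) * Real.pi with hu
  set v : ℝ := 2 * ((n : ℝ) + 1) * Real.pi with hv
  have hn : (0:ℝ) ≤ (n:ℝ) := Nat.cast_nonneg n
  have hu0 : 0 ≤ u := by rw [hu]; positivity
  have hp1 : ∀ x ∈ Set.Ioo (0:ℝ) Real.pi, 0 < x + u := fun x hx => by
    have := hx.1; linarith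
  have hp2 : ∀ x ∈ Set.Ioo (0:ℝ) Real.pi, 0 < v - x := fun x hx => by
    have := hx.2; rw [hv]; nlinarith
  have hab : ∀ x ∈ Set.Ioo (0:ℝ) Real.pi, x + u < v - x := fun x hx => by
    have := hx.2; rw [hu, hv]; nlinarith
  have hHG : ∀ w : ℝ, 0 < w → H w = G α c 0 w := by
    intro w hw
    have h1 := hH w hw
    have h2 := (tendsto_cos hα hα2 hc hw).const_mul (1 / Real.pi)
    exact tendsto_nhds_unique h1 h2
  -- the iterated derivatives
  have claimA : ∀ k : ℕ, ∀ x ∈ Set.Ioo (0:ℝ) Real.pi,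
      iteratedDerivWithin k (fun x : ℝ => H (x + u) + H (v - x)) (Set.Ioo 0 Real.pi) x
        = G α c k (x + u) + (-1:ℝ) ^ k * G α c k (v - x) := by
    intro k
    induction k with
    | zero =>
      intro x hx
      rw [iteratedDerivWithin_zero]
      rw [hHG _ (hp1 x hx), hHG _ (hp2 x hx)]
      simp
    | succ k ih =>
      intro x hx
      have hUD : UniqueDiffWithinAt ℝ (Set.Ioo (0:ℝ) Real.pi) x :=
        (uniqueDiffOn_Ioo 0 Real.pi) x hx
      rw [iteratedDerivWithin_succ]
      rw [derivWithin_congr (fun y hy => ih y hy) (ih x hx)]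
      rw [derivWithin_of_isOpen isOpen_Ioo hx]
      have h1 : HasDerivAt (fun y : ℝ => G α c k (y + u)) (G α c (k + 1) (x + u)) x := by
        have hinner : HasDerivAt (fun y : ℝ => y + u) 1 x := (hasDerivAt_id x).add_const u
        have := (hasDerivAt_G hα hα2 hc k (hp1 x hx)).comp x hinner
        simpa [Function.comp_def] using this
      have h2 : HasDerivAt (fun y : ℝ => G α c k (v - y)) (-(G α c (k + 1) (v - x))) x := by
        have hinner : HasDerivAt (fun y : ℝ => v - y) (-1) x := by
          simpa using (hasDerivAt_id x).const_sub v
        have := (hasDerivAt_G hα hα2 hc k (hp2 x hx)).comp x hinner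
        simpa [Function.comp_def] using this
      have h3 : HasDerivAt (fun y : ℝ => G α c k (y + u) + (-1:ℝ) ^ k * G α c k (v - y))
          (G α c (k + 1) (x + u) + (-1:ℝ) ^ (k + 1) * G α c (k + 1) (v - x)) x := by
        have h4 := h1.add (h2.const_mul ((-1:ℝ) ^ k))
        exact h4.congr_deriv (by ring)
      exact h3.deriv
  constructor
  · -- smoothness, via analyticity
    have hGcR : AnalyticOnNhd ℝ (Gc α c) {z : ℂ | 0 < z.re} :=
      (Gc_analytic hα hα2 hc).restrictScalars
    have hre : AnalyticOnNhd ℝ (fun z : ℂ => z.re) univ := by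
      have := Complex.reCLM.analyticOnNhd (univ : Set ℂ)
      exact this
    have hofReal : AnalyticOnNhd ℝ (fun x : ℝ => (x : ℂ)) univ := by
      exact Complex.ofRealCLM.analyticOnNhd (univ : Set ℝ)
    have hmap1 : AnalyticOnNhd ℝ (fun x : ℝ => ((x : ℂ) + (u : ℂ))) (Set.Ioo (0:ℝ) Real.pi) :=
      ((hofReal.add analyticOnNhd_const).mono (subset_univ _))
    have hmap2 : AnalyticOnNhd ℝ (fun x : ℝ => ((v : ℂ) - (x : ℂ))) (Set.Ioo (0:ℝ) Real.pi) :=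
      ((analyticOnNhd_const.sub hofReal).mono (subset_univ _))
    have t1 : AnalyticOnNhd ℝ (fun x : ℝ => Gc α c ((x : ℂ) + (u : ℂ)))
        (Set.Ioo (0:ℝ) Real.pi) := by
      apply hGcR.comp hmap1
      intro x hx
      simpa using hp1 x hx
    have t2 := hre.comp t1 (mapsTo_univ _ _)
    have t3 : AnalyticOnNhd ℝ (fun x : ℝ => Gc α c ((v : ℂ) - (x : ℂ)))
        (Set.Ioo (0:ℝ) Real.pi) := by
      apply hGcR.comp hmap2
      intro x hx
      simpa using hp2 x hx
    have t4 := hre.comp t3 (mapsTo_univ _ _)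
    have hA : AnalyticOnNhd ℝ (fun x : ℝ =>
        (1 / Real.pi) * (Gc α c ((x : ℂ) + (u : ℂ))).re
          + (1 / Real.pi) * (Gc α c ((v : ℂ) - (x : ℂ))).re) (Set.Ioo (0:ℝ) Real.pi) :=
      (analyticOnNhd_const.mul t2).add (analyticOnNhd_const.mul t4)
    have hEq : EqOn (fun x : ℝ =>
        (1 / Real.pi) * (Gc α c ((x : ℂ) + (u : ℂ))).re
          + (1 / Real.pi) * (Gc α c ((v : ℂ) - (x : ℂ))).re)
        (fun x : ℝ => H (x + u) + H (v - x)) (Set.Ioo (0:ℝ) Real.pi) := by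
      intro x hx
      have e1 : ((x : ℂ) + (u : ℂ)) = (((x + u : ℝ)) : ℂ) := by push_cast; ring
      have e2 : ((v : ℂ) - (x : ℂ)) = (((v - x : ℝ)) : ℂ) := by push_cast; ring
      simp only
      rw [e1, e2, Gc_re hα hα2 hc (hp1 x hx), Gc_re hα hα2 hc (hp2 x hx),
        hHG _ (hp1 x hx), hHG _ (hp2 x hx)]
      simp [G]
    exact (hA.congr isOpen_Ioo hEq).contDiffOn (uniqueDiffOn_Ioo 0 Real.pi)
  · intro p x hx
    refine ⟨?_, ?_⟩
    · rw [claimA (2 * p) x hx, (even_two_mul p).neg_one_pow]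
      have h1 := G_even_pos hα hα2 hc p (hp1 x hx)
      have h2 := G_even_pos hα hα2 hc p (hp2 x hx)
      linarith
    · rw [claimA (2 * p + 1) x hx, (odd_two_mul_add_one p).neg_one_pow]
      have h4 := G_odd_lt hα hα2 hc (odd_two_mul_add_one p) (hp1 x hx) (hab x hx)
      linarith
end

section
/- Let α ∈ (0,2] and c > 0. Then the derivative G_{α,c}'(x) tends to 0 as x tends to π from the left: lim_{x→π⁻} G_{α,c}'(x) = 0. -/
/-!
Write `z = e^{ix}` and `aₙ = (c + n^α)⁻¹`. Summing by parts twice turns `(1 - z)² ∑ aₙ zⁿ` into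
`∑ Δ²aₙ zⁿ`, and two applications of the mean value theorem give `Δ²aₙ = O(n^{-α-2})`, so
`∑ n |Δ²aₙ| < ∞`. Hence on `(0, 2π)` the Green function is the real part of
`(∑ Δ²aₙ e^{inx}) / (1 - e^{ix})²`, which is `C¹` in `x`. Since the coefficients are real, it is
invariant under `x ↦ 2π - x`, so its continuous derivative vanishes at `π`.
-/

open Filter Set Topology Complex ComplexConjugate

section SecondDifference

variable {R : Type*} [CommRing R]

/-- The coefficients of `(1 - z)² ∑ aₙ zⁿ`: second differences of `a` extended by zero to
negative indices. -/
def secondDiff (a : ℕ → R) : ℕ → R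
  | 0 => a 0
  | 1 => a 1 - 2 * a 0
  | n + 2 => a (n + 2) - 2 * a (n + 1) + a n

lemma map_secondDiff {S : Type*} [CommRing S] (f : R →+* S) (a : ℕ → R) (n : ℕ) :
    f (secondDiff a n) = secondDiff (fun k => f (a k)) n := by
  match n with
  | 0 => rfl
  | 1 => simp [secondDiff, map_ofNat]
  | n + 2 => simp [secondDiff, map_ofNat]

lemma one_sub_sq_mul_sum_range (a : ℕ → R) (z : R) (N : ℕ) :
    (1 - z) ^ 2 * ∑ n ∈ Finset.range (N + 2), a n * z ^ n =
      ∑ n ∈ Finset.range (N + 2), secondDiff a n * z ^ n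
        + ((a N - 2 * a (N + 1)) * z ^ (N + 2) + a (N + 1) * z ^ (N + 3)) := by
  induction N with
  | zero =>
    simp only [zero_add, Finset.sum_range_succ, Finset.range_one, Finset.sum_singleton, pow_zero,
      mul_one, pow_one, secondDiff]
    ring
  | succ N ih =>
    rw [Finset.sum_range_succ, mul_add, ih, Finset.sum_range_succ _ (N + 2)]
    simp only [secondDiff]
    ring

end SecondDifference

theorem tendsto_sum_range_mul_pow_of_summable_secondDiff {K : Type*} [NormedField K]
    {a : ℕ → K} {z : K} (hz : z ≠ 1) (ha : Tendsto (fun n => a n * z ^ n) atTop (𝓝 0))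
    (hs : Summable fun n => secondDiff a n * z ^ n) :
    Tendsto (fun N => ∑ n ∈ Finset.range N, a n * z ^ n) atTop
      (𝓝 ((∑' n, secondDiff a n * z ^ n) / (1 - z) ^ 2)) := by
  have hz' : (1 - z) ^ 2 ≠ 0 := pow_ne_zero 2 (sub_ne_zero.mpr hz.symm)
  have hboundary : Tendsto (fun N => (a N - 2 * a (N + 1)) * z ^ (N + 2) + a (N + 1) * z ^ (N + 3))
      atTop (𝓝 0) := by
    have h1 := ha.comp (tendsto_add_atTop_nat 1)
    have hsplit : ∀ N, (a N - 2 * a (N + 1)) * z ^ (N + 2) + a (N + 1) * z ^ (N + 3) =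
        z ^ 2 * (a N * z ^ N) + (z ^ 2 - 2 * z) * (a (N + 1) * z ^ (N + 1)) := fun N => by ring
    simpa [hsplit] using (ha.const_mul (z ^ 2)).add (h1.const_mul (z ^ 2 - 2 * z))
  rw [← tendsto_add_atTop_iff_nat 2]
  have hlim := ((hs.hasSum.tendsto_sum_nat.comp (tendsto_add_atTop_nat 2)).add
    hboundary).div_const ((1 - z) ^ 2)
  rw [add_zero] at hlim
  refine hlim.congr fun N => ?_
  rw [Function.comp_apply, div_eq_iff hz', mul_comm _ ((1 - z) ^ 2), one_sub_sq_mul_sum_range]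

lemma summable_norm_of_summable_nat_mul_norm {E : Type*} [NormedAddCommGroup E] {f : ℕ → E}
    (hf : Summable fun n : ℕ => (n : ℝ) * ‖f n‖) : Summable fun n => ‖f n‖ := by
  refine (summable_nat_add_iff 1).mp (((summable_nat_add_iff 1).mpr hf).of_nonneg_of_le
    (fun _ => norm_nonneg _) fun n => ?_)
  push_cast
  nlinarith [norm_nonneg (f (n + 1)), (n.cast_nonneg : (0 : ℝ) ≤ n)]

lemma norm_exp_mul_I_pow (x : ℝ) (n : ℕ) : ‖cexp (x * I) ^ n‖ = 1 := by
  rw [norm_pow, norm_exp_ofReal_mul_I, one_pow]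

lemma exp_mul_I_pow (x : ℝ) (n : ℕ) : cexp (x * I) ^ n = cexp ((n * x : ℝ) * I) := by
  rw [← exp_nat_mul]; push_cast; ring_nf

lemma exp_mul_I_ne_one {x : ℝ} (h0 : 0 < x) (h2π : x < 2 * Real.pi) : cexp (x * I) ≠ 1 := fun h =>
  h0.ne' <| (Real.cos_eq_one_iff_of_lt_of_lt (by linarith) h2π).mp <| by
    simpa using congrArg re h

lemma hasDerivAt_exp_mul_I_pow (n : ℕ) (x : ℝ) :
    HasDerivAt (fun y : ℝ => cexp (y * I) ^ n) (n * I * cexp (x * I) ^ n) x := by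
  have h : HasDerivAt (fun y : ℝ => cexp (y * I)) (cexp (x * I) * I) x := by
    simpa using ((hasDerivAt_id (x : ℂ)).mul_const I).cexp.comp_ofReal
  refine (h.fun_pow n).congr_deriv ?_
  cases n with
  | zero => simp
  | succ n => rw [Nat.add_sub_cancel]; push_cast; ring

theorem contDiff_tsum_mul_exp_mul_I_pow {p : ℕ → ℂ}
    (hp : Summable fun n : ℕ => (n : ℝ) * ‖p n‖) :
    ContDiff ℝ 1 fun x : ℝ => ∑' n, p n * cexp (x * I) ^ n := by
  have hbound : ∀ n (x : ℝ), ‖p n * (n * I * cexp (x * I) ^ n)‖ = n * ‖p n‖ := fun n x => by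
    simp [mul_comm]
  have hderiv : ∀ x : ℝ, HasDerivAt (fun x : ℝ => ∑' n, p n * cexp (x * I) ^ n)
      (∑' n, p n * (n * I * cexp (x * I) ^ n)) x :=
    hasDerivAt_tsum (y₀ := 0) hp (fun n x => (hasDerivAt_exp_mul_I_pow n x).const_mul (p n))
      (fun n x => (hbound n x).le)
      ((summable_norm_of_summable_nat_mul_norm hp).of_norm_bounded fun n => by
        rw [norm_mul, norm_exp_mul_I_pow, mul_one])
  refine contDiff_one_iff_deriv.mpr ⟨fun x => (hderiv x).differentiableAt, ?_⟩
  rw [funext fun x => (hderiv x).deriv]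
  exact continuous_tsum (fun n => by fun_prop) hp fun n x => (hbound n x).le

theorem exists_second_difference_eq {f f' f'' : ℝ → ℝ} {a : ℝ}
    (hf : ∀ t ∈ Icc a (a + 2), HasDerivAt f (f' t) t)
    (hf' : ∀ t ∈ Icc a (a + 2), HasDerivAt f' (f'' t) t) :
    ∃ η ∈ Icc a (a + 2), f a - 2 * f (a + 1) + f (a + 2) = f'' η := by
  have hstep : ∀ t ∈ Icc a (a + 1),
      HasDerivAt (fun t => f (t + 1) - f t) (f' (t + 1) - f' t) t := fun t ht =>
    ((hf (t + 1) ⟨by linarith [ht.1], by linarith [ht.2]⟩).comp_add_const t 1).sub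
      (hf t ⟨ht.1, by linarith [ht.2]⟩)
  obtain ⟨ξ, hξ, hξeq⟩ := exists_hasDerivAt_eq_slope _ _ (lt_add_one a)
    (fun t ht => (hstep t ht).continuousAt.continuousWithinAt)
    (fun t ht => hstep t (Ioo_subset_Icc_self ht))
  have hf'ξ : ∀ t ∈ Icc ξ (ξ + 1), HasDerivAt f' (f'' t) t := fun t ht =>
    hf' t ⟨by linarith [hξ.1, ht.1], by linarith [hξ.2, ht.2]⟩
  obtain ⟨η, hη, hηeq⟩ := exists_hasDerivAt_eq_slope _ _ (lt_add_one ξ)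
    (fun t ht => (hf'ξ t ht).continuousAt.continuousWithinAt)
    (fun t ht => hf'ξ t (Ioo_subset_Icc_self ht))
  refine ⟨η, ⟨by linarith [hξ.1, hη.1], by linarith [hξ.2, hη.2]⟩, ?_⟩
  rw [hηeq, add_sub_cancel_left, div_one, hξeq, add_sub_cancel_left, div_one]
  ring_nf

section InvAddRpow

variable {α c t : ℝ}

lemma hasDerivAt_inv_add_rpow (ht : 0 < t) (hc : 0 ≤ c) :
    HasDerivAt (fun t : ℝ => (c + t ^ α)⁻¹) (-(α * t ^ (α - 1)) / (c + t ^ α) ^ 2) t :=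
  ((Real.hasDerivAt_rpow_const (Or.inl ht.ne')).const_add c).inv
    (add_pos_of_nonneg_of_pos hc (Real.rpow_pos_of_pos ht α)).ne'

lemma hasDerivAt_deriv_inv_add_rpow (ht : 0 < t) (hc : 0 ≤ c) :
    HasDerivAt (fun t : ℝ => -(α * t ^ (α - 1)) / (c + t ^ α) ^ 2)
      (α * t ^ (α - 2) * ((α + 1) * t ^ α - (α - 1) * c) / (c + t ^ α) ^ 3) t := by
  have hpos : 0 < c + t ^ α := add_pos_of_nonneg_of_pos hc (Real.rpow_pos_of_pos ht α)
  have hnum := ((Real.hasDerivAt_rpow_const (p := α - 1) (Or.inl ht.ne')).const_mul α).neg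
  have hden := ((Real.hasDerivAt_rpow_const (p := α) (Or.inl ht.ne')).const_add c).pow 2
  refine (hnum.div hden (pow_ne_zero 2 hpos.ne')).congr_deriv ?_
  have h1 : t ^ (α - 1) = t ^ (α - 2) * t := by
    rw [← Real.rpow_add_one ht.ne']; ring_nf
  have h0 : t ^ α = t ^ (α - 2) * t ^ 2 := by
    rw [← Real.rpow_natCast, ← Real.rpow_add ht]; push_cast; ring_nf
  simp only [Pi.neg_apply, Pi.pow_apply]
  rw [show α - 1 - 1 = α - 2 by ring, h1]
  field_simp
  rw [h0]
  ring

lemma abs_deriv2_inv_add_rpow_le (hα : 0 < α) (ht : 0 < t) (hc : 0 ≤ c) :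
    |α * t ^ (α - 2) * ((α + 1) * t ^ α - (α - 1) * c) / (c + t ^ α) ^ 3|
      ≤ α * (α + 1 + |α - 1|) * t ^ (-α - 2) := by
  set u := t ^ α with hu_def
  have hu : 0 < u := Real.rpow_pos_of_pos ht α
  have hpos : 0 < c + u := add_pos_of_nonneg_of_pos hc hu
  have hnum : |(α + 1) * u - (α - 1) * c| ≤ (α + 1 + |α - 1|) * (c + u) := by
    calc |(α + 1) * u - (α - 1) * c| ≤ |(α + 1) * u| + |(α - 1) * c| := abs_sub _ _
      _ = (α + 1) * u + |α - 1| * c := by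
        rw [abs_mul, abs_mul, abs_of_pos (by linarith), abs_of_pos hu, abs_of_nonneg hc]
      _ ≤ (α + 1 + |α - 1|) * (c + u) := by nlinarith [abs_nonneg (α - 1)]
  have hsplit : t ^ (α - 2) = t ^ (-α - 2) * u ^ 2 := by
    rw [hu_def, ← Real.rpow_natCast, ← Real.rpow_mul ht.le, ← Real.rpow_add ht]
    push_cast; ring_nf
  have hu2 : u ^ 2 ≤ (c + u) ^ 2 := pow_le_pow_left₀ hu.le (by linarith) 2
  have htpos : 0 < t ^ (-α - 2) := Real.rpow_pos_of_pos ht _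
  rw [abs_div, abs_mul, abs_mul, abs_of_pos hα, abs_of_pos (Real.rpow_pos_of_pos ht _),
    abs_of_pos (pow_pos hpos 3), div_le_iff₀ (pow_pos hpos 3), hsplit]
  calc α * (t ^ (-α - 2) * u ^ 2) * |(α + 1) * u - (α - 1) * c|
      ≤ α * (t ^ (-α - 2) * (c + u) ^ 2) * ((α + 1 + |α - 1|) * (c + u)) := by gcongr
    _ = α * (α + 1 + |α - 1|) * t ^ (-α - 2) * (c + u) ^ 3 := by ring

lemma abs_secondDiff_inv_add_rpow_le (hα : 0 < α) (hc : 0 ≤ c) (n : ℕ) :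
    |secondDiff (fun k : ℕ => (c + (k : ℝ) ^ α)⁻¹) (n + 3)|
      ≤ α * (α + 1 + |α - 1|) * ((n : ℝ) + 1) ^ (-α - 2) := by
  have hn : (0 : ℝ) < n + 1 := by positivity
  obtain ⟨η, hη, hηeq⟩ := exists_second_difference_eq (a := (n : ℝ) + 1)
    (fun t ht => hasDerivAt_inv_add_rpow (α := α) (by linarith [ht.1]) hc)
    (fun t ht => hasDerivAt_deriv_inv_add_rpow (by linarith [ht.1]) hc)
  have hsd : secondDiff (fun k : ℕ => (c + (k : ℝ) ^ α)⁻¹) (n + 3) =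
      (c + ((n : ℝ) + 1) ^ α)⁻¹ - 2 * (c + ((n : ℝ) + 1 + 1) ^ α)⁻¹
        + (c + ((n : ℝ) + 1 + 2) ^ α)⁻¹ := by
    simp only [secondDiff]; push_cast; ring_nf
  rw [hsd, hηeq]
  refine (abs_deriv2_inv_add_rpow_le (t := η) hα (by linarith [hη.1]) hc).trans ?_
  exact mul_le_mul_of_nonneg_left (Real.rpow_le_rpow_of_nonpos hn hη.1 (by linarith))
    (by positivity)

lemma summable_nat_mul_abs_secondDiff_inv_add_rpow (hα : 0 < α) (hc : 0 ≤ c) :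
    Summable fun n : ℕ => (n : ℝ) * |secondDiff (fun k : ℕ => (c + (k : ℝ) ^ α)⁻¹) n| := by
  set C := α * (α + 1 + |α - 1|)
  have hmajorant : Summable fun n : ℕ => 3 * C * ((n : ℝ) + 1) ^ (-α - 1) := by
    refine Summable.mul_left _ ?_
    exact_mod_cast (summable_nat_add_iff 1).mpr (Real.summable_nat_rpow.mpr (by linarith))
  refine (summable_nat_add_iff 3).mp
    (hmajorant.of_nonneg_of_le (fun n => by positivity) fun n => ?_)
  have hn : (0 : ℝ) < n + 1 := by positivity
  have hpow : ((n : ℝ) + 1) ^ (-α - 1) = ((n : ℝ) + 1) * ((n : ℝ) + 1) ^ (-α - 2) := by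
    rw [← Real.rpow_one_add' hn.le (by linarith)]; ring_nf
  calc ((n + 3 : ℕ) : ℝ) * |secondDiff (fun k : ℕ => (c + (k : ℝ) ^ α)⁻¹) (n + 3)|
      ≤ (3 * ((n : ℝ) + 1)) * (C * ((n : ℝ) + 1) ^ (-α - 2)) := by
        gcongr
        · push_cast; linarith
        · exact abs_secondDiff_inv_add_rpow_le hα hc n
    _ = 3 * C * ((n : ℝ) + 1) ^ (-α - 1) := by rw [hpow]; ring

end InvAddRpow

/-- The sum of `∑ aₙ cos (n x)` after two summations by parts; meaningful only where
`e^{ix} ≠ 1`. -/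
noncomputable def cosSeriesSum (a : ℕ → ℝ) (x : ℝ) : ℝ :=
  ((∑' n, ((secondDiff a n : ℝ) : ℂ) * cexp (x * I) ^ n) / (1 - cexp (x * I)) ^ 2).re

section CosSeriesSum

variable {a : ℕ → ℝ}

lemma tendsto_sum_range_mul_cos (ha : Tendsto a atTop (𝓝 0))
    (hs : Summable fun n => |secondDiff a n|) {x : ℝ} (hx : cexp (x * I) ≠ 1) :
    Tendsto (fun N => ∑ n ∈ Finset.range N, a n * Real.cos (n * x)) atTop
      (𝓝 (cosSeriesSum a x)) := by
  have hcast : ∀ n, secondDiff (fun k => (a k : ℂ)) n = ((secondDiff a n : ℝ) : ℂ) :=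
    fun n => (map_secondDiff ofRealHom a n).symm
  have hterm : Tendsto (fun n => (a n : ℂ) * cexp (x * I) ^ n) atTop (𝓝 0) := by
    refine tendsto_zero_iff_norm_tendsto_zero.mpr ?_
    simpa [norm_exp_mul_I_pow] using ha.norm
  have hsum : Summable fun n => secondDiff (fun k => (a k : ℂ)) n * cexp (x * I) ^ n := by
    refine Summable.of_norm ?_
    simpa [hcast, norm_exp_mul_I_pow] using hs
  have hlim := tendsto_sum_range_mul_pow_of_summable_secondDiff hx hterm hsum
  simp only [hcast] at hlim
  refine ((continuous_re.tendsto _).comp hlim).congr fun N => ?_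
  simp only [Function.comp_apply, re_sum, re_ofReal_mul, exp_mul_I_pow, exp_ofReal_mul_I_re]

lemma cosSeriesSum_two_pi_sub (x : ℝ) : cosSeriesSum a (2 * Real.pi - x) = cosSeriesSum a x := by
  have hconj : cexp (((2 * Real.pi - x : ℝ) : ℂ) * I) = conj (cexp (x * I)) := by
    rw [← exp_conj, map_mul, conj_ofReal, conj_I,
      show (((2 * Real.pi - x : ℝ) : ℂ)) * I = x * -I + 2 * Real.pi * I by push_cast; ring,
      exp_add, exp_two_pi_mul_I, mul_one]
  rw [cosSeriesSum, cosSeriesSum, hconj, ← conj_re]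
  congr 1
  simp [conj_tsum, map_div₀]

lemma contDiffOn_cosSeriesSum (hs : Summable fun n : ℕ => (n : ℝ) * |secondDiff a n|) :
    ContDiffOn ℝ 1 (cosSeriesSum a) {x | cexp (x * I) ≠ 1} := by
  have hnum := contDiff_tsum_mul_exp_mul_I_pow (p := fun n => ((secondDiff a n : ℝ) : ℂ))
    (by simpa using hs)
  have hexp : ContDiff ℝ 1 fun x : ℝ => cexp (x * I) :=
    (ofRealCLM.contDiff.mul contDiff_const).cexp
  have hden : ContDiffOn ℝ 1 (fun x : ℝ => ((1 - cexp (x * I)) ^ 2)⁻¹) {x | cexp (x * I) ≠ 1} :=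
    ((contDiff_const.sub hexp).pow 2).contDiffOn.fun_inv fun x hx =>
      pow_ne_zero 2 (sub_ne_zero.mpr (Ne.symm hx))
  unfold cosSeriesSum
  simp only [div_eq_mul_inv]
  exact reCLM.contDiff.comp_contDiffOn (hnum.contDiffOn.mul hden)

end CosSeriesSum

theorem tendsto_deriv_zero_of_symm {g : ℝ → ℝ} {a : ℝ} {s : Set ℝ} (hs : IsOpen s) (ha : a ∈ s)
    (hg : ContDiffOn ℝ 1 g s) (hsymm : ∀ x, g (2 * a - x) = g x) :
    Tendsto (deriv g) (𝓝 a) (𝓝 0) := by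
  have hzero : deriv g a = 0 := by
    have h := deriv_comp_const_sub g (2 * a) a
    simp only [hsymm, show 2 * a - a = a by ring] at h
    linarith
  have hcont := (hg.continuousOn_deriv_of_isOpen hs le_rfl).continuousAt (hs.mem_nhds ha)
  rwa [ContinuousAt, hzero] at hcont

lemma tendsto_green_partial_sums {α c : ℝ} (hα : 0 < α) (hc : 0 ≤ c) {x : ℝ}
    (hx : cexp (x * I) ≠ 1) :
    Tendsto (fun N : ℕ => (1 / (2 * Real.pi)) *
        (1 / c + 2 * ∑ n ∈ Finset.Icc 1 N, Real.cos ((n : ℝ) * x) / (c + (n : ℝ) ^ α)))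
      atTop (𝓝 ((1 / (2 * Real.pi)) *
        (2 * cosSeriesSum (fun n : ℕ => (c + (n : ℝ) ^ α)⁻¹) x - 1 / c))) := by
  set a := fun n : ℕ => (c + (n : ℝ) ^ α)⁻¹
  have ha : Tendsto a atTop (𝓝 0) :=
    (tendsto_atTop_add_const_left _ c
      ((tendsto_rpow_atTop hα).comp tendsto_natCast_atTop_atTop)).inv_tendsto_atTop
  have hsd : Summable fun n => |secondDiff a n| := by
    have h1 := summable_nat_mul_abs_secondDiff_inv_add_rpow hα hc
    simp only [← Real.norm_eq_abs] at h1 ⊢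
    exact summable_norm_of_summable_nat_mul_norm h1
  have hlim := (tendsto_add_atTop_iff_nat 1).mpr (tendsto_sum_range_mul_cos ha hsd hx)
  refine ((hlim.const_mul 2).sub_const (1 / c) |>.const_mul _).congr fun N => ?_
  rw [Nat.range_succ_eq_Icc_zero, ← Finset.insert_Icc_add_one_left_eq_Icc N.zero_le,
    Finset.sum_insert (by simp)]
  simp only [a, Nat.cast_zero, zero_mul, zero_add, Real.cos_zero, Real.zero_rpow hα.ne', add_zero,
    mul_one, div_eq_inv_mul]
  ring

theorem green_periodic_deriv_tendsto_zero_general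
    (α c : ℝ) (hα : 0 < α) (hc : 0 < c) (G : ℝ → ℝ)
    (hG : ∀ x ∈ Set.Ioo (0 : ℝ) Real.pi,
      Tendsto (fun N : ℕ =>
          (1 / (2 * Real.pi)) *
            (1 / c + 2 * ∑ n ∈ Finset.Icc 1 N, Real.cos ((n : ℝ) * x) / (c + (n : ℝ) ^ α)))
        atTop (nhds (G x))) :
    Tendsto (deriv G) (nhdsWithin Real.pi (Set.Iio Real.pi)) (nhds 0) := by
  set a := fun n : ℕ => (c + (n : ℝ) ^ α)⁻¹
  set g := fun x => (1 / (2 * Real.pi)) * (2 * cosSeriesSum a x - 1 / c)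
  have hGg : EqOn G g (Ioo 0 Real.pi) := fun x hx =>
    tendsto_nhds_unique (hG x hx) (tendsto_green_partial_sums hα hc.le
      (exp_mul_I_ne_one hx.1 (by linarith [hx.2, Real.pi_pos])))
  have hderiv_eq : deriv G =ᶠ[𝓝[<] Real.pi] deriv g := by
    filter_upwards [Ioo_mem_nhdsLT Real.pi_pos] with x hx
    exact (hGg.eventuallyEq_of_mem (isOpen_Ioo.mem_nhds hx)).deriv_eq
  have hg : ContDiffOn ℝ 1 g {x | cexp (x * I) ≠ 1} :=
    contDiffOn_const.mul ((contDiffOn_const.mul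
      (contDiffOn_cosSeriesSum (summable_nat_mul_abs_secondDiff_inv_add_rpow hα hc.le))).sub
      contDiffOn_const)
  have hlim := tendsto_deriv_zero_of_symm (isOpen_ne_fun (by fun_prop) continuous_const)
    (exp_mul_I_ne_one Real.pi_pos (by linarith [Real.pi_pos])) hg
    fun x => by simp only [g, cosSeriesSum_two_pi_sub]
  exact (hlim.mono_left nhdsWithin_le_nhds).congr' hderiv_eq.symm

/-- For `α ∈ (0,2]` and `c > 0`, the derivative of the periodic Green function `G_{α,c}`
tends to `0` as `x → π⁻`. -/
theorem green_periodic_deriv_tendsto_zero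
    (α c : ℝ) (hα : 0 < α) (hα2 : α ≤ 2) (hc : 0 < c) (G : ℝ → ℝ)
    (hG : ∀ x ∈ Set.Ioo (0 : ℝ) Real.pi,
      Tendsto (fun N : ℕ =>
          (1 / (2 * Real.pi)) *
            (1 / c + 2 * ∑ n ∈ Finset.Icc 1 N, Real.cos ((n : ℝ) * x) / (c + (n : ℝ) ^ α)))
        atTop (nhds (G x)))
    (hdiff : ∀ x ∈ Set.Ioo (0 : ℝ) Real.pi, DifferentiableAt ℝ G x) :
    Tendsto (deriv G) (nhdsWithin Real.pi (Set.Iio Real.pi)) (nhds 0) :=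
  green_periodic_deriv_tendsto_zero_general α c hα hc G hG
end

section
/- Let α ∈ (0,2). Then the function g_α(t) := (2 sin(πα/2)/π) · t^{α-1} / ( 1 + 2 cos(πα/2)·t^α + t^{2α} ) is a probability density on (0,∞): g_α(t) > 0 for every t > 0 and ∫_0^∞ g_α(t) dt = 1. -/
open Filter Set MeasureTheory

/-!
With `θ = πα/2 ∈ (0, π)` and `u = t^α`, the denominator is `(u + cos θ)² + sin² θ`, which is
positive, and `t^(α-1) dt = du / α`. The remaining integral is an arctangent:
`∫₀^∞ du / ((u + cos θ)² + sin² θ) = (π/2 - arctan (cot θ)) / sin θ = θ / sin θ`,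
so the total mass is `(2 sin θ / π) · (1/α) · (θ / sin θ) = 2θ / (πα) = 1`.
-/

namespace Real

lemma one_add_two_mul_cos_mul_add_sq (θ x : ℝ) :
    1 + 2 * cos θ * x + x ^ 2 = (x + cos θ) ^ 2 + sin θ ^ 2 := by
  linear_combination (-1 : ℝ) * sin_sq_add_cos_sq θ

lemma rpow_two_mul {x : ℝ} (hx : 0 ≤ x) (y : ℝ) : x ^ (2 * y) = (x ^ y) ^ 2 := by
  rw [mul_comm, ← rpow_mul_natCast hx]
  norm_num

lemma arctan_cos_div_sin {θ : ℝ} (hθ0 : 0 < θ) (hθπ : θ < π) :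
    arctan (cos θ / sin θ) = π / 2 - θ := by
  have : cos θ / sin θ = tan (π / 2 - θ) := by
    rw [tan_eq_sin_div_cos, sin_pi_div_two_sub, cos_pi_div_two_sub]
  rw [this]
  exact arctan_tan (by linarith) (by linarith)

lemma integral_Ioi_zero_inv_add_sq_add_sq (c : ℝ) {s : ℝ} (hs : 0 < s) :
    ∫ u in Ioi (0 : ℝ), ((u + c) ^ 2 + s ^ 2)⁻¹ = (π / 2 - arctan (c / s)) / s := by
  have hderiv (u : ℝ) :
      HasDerivAt (fun v ↦ arctan ((v + c) / s) / s) ((u + c) ^ 2 + s ^ 2)⁻¹ u := by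
    refine (((hasDerivAt_id u).add_const c).div_const s).arctan.div_const s |>.congr_deriv ?_
    rw [id]
    field_simp
    ring
  have hlim : Tendsto (fun v ↦ arctan ((v + c) / s) / s) atTop (nhds (π / 2 / s)) :=
    ((tendsto_arctan_atTop.mono_right nhdsWithin_le_nhds).comp
      ((tendsto_atTop_add_const_right _ c tendsto_id).atTop_div_const hs)).div_const s
  rw [integral_Ioi_of_hasDerivAt_of_nonneg (hderiv 0).continuousAt.continuousWithinAt
    (fun u _ ↦ hderiv u) (fun u _ ↦ by positivity) hlim, zero_add, sub_div]

lemma integral_Ioi_zero_inv_add_cos_sq_add_sin_sq {θ : ℝ} (hθ0 : 0 < θ) (hθπ : θ < π) :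
    ∫ u in Ioi (0 : ℝ), ((u + cos θ) ^ 2 + sin θ ^ 2)⁻¹ = θ / sin θ := by
  rw [integral_Ioi_zero_inv_add_sq_add_sq _ (sin_pos_of_pos_of_lt_pi hθ0 hθπ),
    arctan_cos_div_sin hθ0 hθπ, sub_sub_cancel]

lemma integral_Ioi_zero_rpow_sub_one_mul_comp_rpow (g : ℝ → ℝ) {α : ℝ} (hα : 0 < α) :
    ∫ t in Ioi (0 : ℝ), t ^ (α - 1) * g (t ^ α) = α⁻¹ * ∫ u in Ioi (0 : ℝ), g u := by
  rw [← integral_comp_rpow_Ioi g hα.ne', abs_of_pos hα, ← integral_const_mul]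
  congr 1 with t
  rw [smul_eq_mul, ← mul_assoc, ← mul_assoc, inv_mul_cancel₀ hα.ne', one_mul]

end Real

open Real in
/-- For `α ∈ (0,2)`, the function
`g_α(t) = (2 sin(πα/2)/π) t^{α-1} / (1 + 2 cos(πα/2) t^α + t^{2α})` is a probability
density on `(0,∞)`. -/
theorem stable_factor_density (α : ℝ) (hα : 0 < α) (hα2 : α < 2) :
    (∀ t : ℝ, 0 < t →
      0 < (2 * Real.sin (Real.pi * α / 2) / Real.pi) *
        (t ^ (α - 1) / (1 + 2 * Real.cos (Real.pi * α / 2) * t ^ α + t ^ (2 * α)))) ∧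
    (∫ t in Set.Ioi (0 : ℝ),
        (2 * Real.sin (Real.pi * α / 2) / Real.pi) *
          (t ^ (α - 1) / (1 + 2 * Real.cos (Real.pi * α / 2) * t ^ α + t ^ (2 * α))))
      = 1 := by
  set θ := π * α / 2
  have hθ0 : 0 < θ := by positivity
  have hθπ : θ < π := by simp only [θ]; nlinarith [pi_pos]
  have hsin : 0 < sin θ := sin_pos_of_pos_of_lt_pi hθ0 hθπ
  have hden (t : ℝ) (ht : 0 < t) :
      1 + 2 * cos θ * t ^ α + t ^ (2 * α) = (t ^ α + cos θ) ^ 2 + sin θ ^ 2 := by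
    rw [rpow_two_mul ht.le α, one_add_two_mul_cos_mul_add_sq]
  refine ⟨fun t ht ↦ ?_, ?_⟩
  · rw [hden t ht]
    positivity
  · calc _ = ∫ t in Ioi (0 : ℝ), 2 * sin θ / π *
          (t ^ (α - 1) * ((t ^ α + cos θ) ^ 2 + sin θ ^ 2)⁻¹) :=
          setIntegral_congr_fun measurableSet_Ioi fun t ht ↦ by
            simp only [hden t ht, div_eq_mul_inv]
      _ = 2 * sin θ / π * (α⁻¹ * (θ / sin θ)) := by
          rw [integral_const_mul, integral_Ioi_zero_rpow_sub_one_mul_comp_rpow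
            (fun u ↦ ((u + cos θ) ^ 2 + sin θ ^ 2)⁻¹) hα,
            integral_Ioi_zero_inv_add_cos_sq_add_sin_sq hθ0 hθπ]
      _ = 1 := by field_simp; ring
end
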